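/- arXiv:2310.05139 — 7 statements merged into one kernel-verified Lean document; each statement's English description precedes it below -/
import Mathlib

section
/- Let G = (V,E) be a finite block graph. Then there exists a partition 𝒞* of V into nonempty parts that maximizes the utilitarian welfare Σ_{C∈𝒞} 2|E(G[C])|/|C| over all partitions of V, and in which every part C ∈ 𝒞* induces either a clique or a star in G. -/
open Finset

/-- The utilitarian welfare `2|E(G[C])|/|C|` of a coalition `C` in a simple fractional
hedonic game: twice the number of edges of the induced subgraph, counted here as the
number of ordered adjacent pairs inside `C`, divided by `|C|`. -/
def uw {V : Type*} [DecidableEq V] (G : SimpleGraph V) [DecidableRel G.Adj]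
    (C : Finset V) : ℚ :=
  (((C ×ˢ C).filter fun p => G.Adj p.1 p.2).card : ℚ) / (C.card : ℚ)

/-- `C` induces a star in `G`: some center `c ∈ C` is adjacent to every other vertex of `C`,
and the remaining vertices form an independent set. -/
def IsStar {V : Type*} (G : SimpleGraph V) (C : Finset V) : Prop :=
  ∃ c ∈ C, (∀ v ∈ C, v ≠ c → G.Adj c v) ∧
    ∀ u ∈ C, ∀ v ∈ C, u ≠ c → v ≠ c → ¬ G.Adj u v

/-- `G` is a block graph: every `S` of size at least 3 inducing a 2-connected subgraph
(connected and remaining connected after deleting any vertex) is a clique. -/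
def IsBlockGraph {V : Type*} (G : SimpleGraph V) : Prop :=
  ∀ S : Set V, 3 ≤ S.ncard → (G.induce S).Connected →
    (∀ v ∈ S, (G.induce (S \ {v})).Connected) → G.IsClique S

/-!
A coalition that is neither a clique nor a star can be split into two nonempty parts without
losing welfare; hence a welfare maximizer with the largest number of parts has only cliques and
stars as parts.

Splitting `C = X ∪ Y` loses no welfare as soon as `2 e(X, Y) ≤ |Y| uw(X) + |X| uw(Y)`, where
`e(X, Y)` counts the edges between `X` and `Y`. If `C` is disconnected, split off a component.
Otherwise the block graph property yields a cut vertex `v` of `C`, and as `C` is no star, some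
component `D` of `C - v` contains an edge. The `d` neighbours of `v` in `D` pairwise lie on a cycle
through `v`, and the vertices of a cycle in a block graph form a clique, so `uw(D) ≥ d(d-1)/|D|`.
Every vertex of `C \ D` has a neighbour in `C \ D`, so `uw(C \ D) ≥ 1`, and
`2 e(D, C \ D) = 2d ≤ |D| + 2d(d-1)/|D| ≤ |D| uw(C \ D) + |C \ D| uw(D)`.
-/

namespace SimpleGraph

variable {V : Type*} {G : SimpleGraph V}

variable (G) in
def restrict (s : Set V) : SimpleGraph V where
  Adj a b := a ∈ s ∧ b ∈ s ∧ G.Adj a b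
  symm := ⟨fun _ _ h => ⟨h.2.1, h.1, h.2.2.symm⟩⟩
  loopless := ⟨fun _ h => G.irrefl h.2.2⟩

lemma restrict_le (s : Set V) : G.restrict s ≤ G := fun _ _ h => h.2.2

lemma Walk.mem_of_mem_support_restrict {s : Set V} {u w x : V} (p : (G.restrict s).Walk u w)
    (hu : u ∈ s) (hx : x ∈ p.support) : x ∈ s := by
  induction p with
  | nil => exact (List.mem_singleton.1 hx) ▸ hu
  | cons h q ih =>
    rcases List.mem_cons.1 hx with rfl | hx
    · exact hu
    · exact ih h.2.1 hx

lemma reachable_induce_of_reachable_restrict {s : Set V} {x y : V} (hx : x ∈ s) (hy : y ∈ s)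
    (h : (G.restrict s).Reachable x y) : (G.induce s).Reachable ⟨x, hx⟩ ⟨y, hy⟩ := by
  obtain ⟨p⟩ := h
  refine ⟨(p.mapLe (restrict_le s)).induce s fun z hz => p.mem_of_mem_support_restrict hx ?_⟩
  rwa [Walk.support_mapLe_eq_support] at hz

lemma induce_connected_of_forall_reachable {s : Set V} (hs : s.Nonempty)
    (h : ∀ x ∈ s, ∀ y ∈ s, (G.restrict s).Reachable x y) : (G.induce s).Connected :=
  (connected_iff _).2
    ⟨fun ⟨x, hx⟩ ⟨y, hy⟩ => reachable_induce_of_reachable_restrict hx hy (h x hx y hy),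
      hs.to_subtype⟩

lemma induce_connected_of_isChain {l : List V} (hl : l ≠ []) (h : l.IsChain G.Adj) :
    (G.induce {x | x ∈ l}).Connected := by
  have := (Walk.ofSupport l hl h).connected_induce_support
  rwa [Walk.support_ofSupport] at this

variable (G) in
noncomputable def componentIn (s : Finset V) (u : V) : Finset V := by
  classical exact {y ∈ s | (G.restrict s).Reachable u y}

variable {s : Finset V} {u y w : V}

lemma mem_componentIn : y ∈ G.componentIn s u ↔ y ∈ s ∧ (G.restrict s).Reachable u y := by
  classical
  rw [componentIn]
  exact mem_filter

lemma componentIn_subset : G.componentIn s u ⊆ s := fun _ hy => (mem_componentIn.1 hy).1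

lemma mem_componentIn_self (hu : u ∈ s) : u ∈ G.componentIn s u :=
  mem_componentIn.2 ⟨hu, Reachable.refl u⟩

lemma mem_componentIn_of_adj (hy : y ∈ G.componentIn s u) (hw : w ∈ s) (hyw : G.Adj y w) :
    w ∈ G.componentIn s u :=
  have ⟨hys, huy⟩ := mem_componentIn.1 hy
  mem_componentIn.2 ⟨hw, huy.trans (Adj.reachable (G := G.restrict s) ⟨hys, hw, hyw⟩)⟩

variable [DecidableEq V]

lemma exists_adj_reachable_erase {s : Finset V} {v a : V} (ha : a ∈ s.erase v)
    (h : (G.restrict s).Reachable a v) :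
    ∃ w ∈ s.erase v, G.Adj v w ∧ (G.restrict (s.erase v)).Reachable a w := by
  obtain ⟨p⟩ := h
  induction p with
  | nil => exact absurd rfl (ne_of_mem_erase ha)
  | @cons a b v hab _ ih =>
    by_cases hb : b = v
    · subst hb
      exact ⟨a, ha, hab.2.2.symm, Reachable.refl a⟩
    · have hb' : b ∈ s.erase v := mem_erase.2 ⟨hb, hab.2.1⟩
      obtain ⟨w, hw, hvw, hbw⟩ := ih hb'
      exact ⟨w, hw, hvw, (Adj.reachable (G := G.restrict _) ⟨ha, hb', hab.2.2⟩).trans hbw⟩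

end SimpleGraph

theorem List.exists_isRotated_cons {α : Type*} {c : List α} {z : α} (hz : z ∈ c) :
    ∃ m : List α, c ~r z :: m := by
  obtain ⟨l₁, l₂, rfl⟩ := List.append_of_mem hz
  exact ⟨l₂ ++ l₁, List.isRotated_append⟩

namespace IsBlockGraph

open SimpleGraph

variable {V : Type*} {G : SimpleGraph V}

theorem isClique_of_cycle (hG : IsBlockGraph G) {c : List V} (hnd : c.Nodup)
    (hlen : 3 ≤ c.length) (hc : (c : Cycle V).Chain G.Adj) : G.IsClique {x | x ∈ c} := by
  classical
  have hconn : ∀ z ∈ c,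
      (G.induce {x | x ∈ c}).Connected ∧ (G.induce ({x | x ∈ c} \ {z})).Connected := by
    intro z hz
    -- rotating `c` to `z :: m`, both `z :: m` and `m` are paths in `G`
    obtain ⟨m, hm⟩ := List.exists_isRotated_cons hz
    have hchain : (z :: (m ++ [z])).IsChain G.Adj := by
      rwa [← Cycle.chain_coe_cons, ← Cycle.coe_eq_coe.2 hm]
    have hzm : z ∉ m := (List.nodup_cons.1 (hm.nodup_iff.1 hnd)).1
    have hm_ne : m ≠ [] := by
      rintro rfl
      have := hm.perm.length_eq
      simp at this
      omega
    constructor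
    · have hset : {x | x ∈ c} = {x | x ∈ z :: m} := Set.ext fun x => hm.mem_iff
      rw [hset]
      exact induce_connected_of_isChain (List.cons_ne_nil _ _)
        (hchain.infix ⟨[], [z], by simp⟩)
    · have hset : {x | x ∈ c} \ {z} = {x | x ∈ m} := by
        ext x
        simp only [Set.mem_sdiff, Set.mem_ofPred_eq, Set.mem_singleton_iff, hm.mem_iff,
          List.mem_cons]
        constructor
        · rintro ⟨rfl | hx, hxz⟩
          exacts [absurd rfl hxz, hx]
        · exact fun hx => ⟨Or.inr hx, fun h => hzm (h ▸ hx)⟩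
      rw [hset]
      exact induce_connected_of_isChain hm_ne (hchain.infix ⟨[z], [z], by simp⟩)
  obtain ⟨z, hz⟩ := List.exists_mem_of_length_pos (by omega : 0 < c.length)
  refine hG _ ?_ (hconn z hz).1 fun z hz => (hconn z hz).2
  rwa [← List.coe_toFinset, Set.ncard_coe_finset, List.toFinset_card_of_nodup hnd]

theorem adj_of_reachable_restrict (hG : IsBlockGraph G) {s : Set V} {v w₁ w₂ : V} (hv : v ∉ s)
    (h₁ : G.Adj v w₁) (h₂ : G.Adj v w₂) (hne : w₁ ≠ w₂) (h : (G.restrict s).Reachable w₁ w₂) :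
    G.Adj w₁ w₂ := by
  classical
  obtain ⟨p⟩ := h
  have hw₁ : w₁ ∈ s := by
    cases p with
    | nil => exact absurd rfl hne
    | cons h _ => exact h.1
  set q := p.toPath
  have hvq : v ∉ q.1.support := fun h => hv (q.1.mem_of_mem_support_restrict hw₁ h)
  have hlen : 2 ≤ q.1.support.length := by
    rw [Walk.length_support]
    have : q.1.length ≠ 0 := fun h0 => hne (Walk.eq_of_length_eq_zero h0)
    omega
  have hcycle : ((v :: q.1.support : List V) : Cycle V).Chain G.Adj := by
    have := (Walk.cons h₁ ((q.1.mapLe (restrict_le s)).concat h₂.symm)).isChain_adj_support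
    rwa [Walk.support_cons, Walk.support_concat, Walk.support_mapLe_eq_support] at this
  exact hG.isClique_of_cycle (List.nodup_cons.2 ⟨hvq, q.2.support_nodup⟩) (by simpa using hlen)
    hcycle (by simp) (by simp) hne

variable [DecidableEq V]

theorem exists_cut_vertex (hG : IsBlockGraph G) {C : Finset V}
    (hconn : ∀ x ∈ C, ∀ y ∈ C, (G.restrict C).Reachable x y) (hnc : ¬ G.IsClique (C : Set V)) :
    ∃ v ∈ C, ∃ x ∈ C.erase v, ∃ y ∈ C.erase v, ¬ (G.restrict (C.erase v)).Reachable x y := by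
  obtain ⟨x, hx, y, hy, hxy, hnadj⟩ : ∃ x ∈ C, ∃ y ∈ C, x ≠ y ∧ ¬ G.Adj x y := by
    simpa [SimpleGraph.IsClique, Set.Pairwise] using hnc
  obtain ⟨w, hw, hyw, -⟩ :=
    exists_adj_reachable_erase (mem_erase.2 ⟨hxy, hx⟩) (hconn x hx y hy)
  have h3 : 2 < #C := two_lt_card_iff.2 ⟨x, y, w, hx, hy, mem_of_mem_erase hw,
    hxy, fun h => hnadj (h ▸ hyw.symm), (ne_of_mem_erase hw).symm⟩
  by_contra! h
  refine hnc (hG C (by rwa [Set.ncard_coe_finset]) (induce_connected_of_forall_reachable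
    ⟨x, hx⟩ hconn) fun v hv => ?_)
  rw [← coe_erase]
  exact induce_connected_of_forall_reachable
    (Nontrivial.erase_nonempty (one_lt_card_iff_nontrivial.1 (by omega))) (h v hv)

end IsBlockGraph

namespace SimpleGraph

variable {V : Type*} {G : SimpleGraph V} [DecidableRel G.Adj] {X Y Z : Finset V}

lemma card_interedges_comm (X Y : Finset V) : #(G.interedges X Y) = #(G.interedges Y X) :=
  have := G.symm
  Rel.card_interedges_comm X Y

lemma card_interedges_self_of_isClique (h : G.IsClique (X : Set V)) :
    #(G.interedges X X) + #X = #X * #X := by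
  have : G.interedges X X = X.offDiag := by
    ext ⟨a, b⟩
    simp only [mk_mem_interedges_iff, mem_offDiag]
    exact ⟨fun ⟨ha, hb, hab⟩ => ⟨ha, hb, hab.ne⟩, fun ⟨ha, hb, hab⟩ => ⟨ha, hb, h ha hb hab⟩⟩
  rw [this, offDiag_card, Nat.sub_add_cancel (Nat.le_mul_self _)]

lemma card_le_card_interedges_self (h : ∀ x ∈ X, ∃ y ∈ X, G.Adj x y) :
    #X ≤ #(G.interedges X X) :=
  card_le_card_of_surjOn Prod.fst fun x hx =>
    have ⟨y, hy, hxy⟩ := h x hx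
    ⟨(x, y), G.mk_mem_interedges_iff.2 ⟨hx, hy, hxy⟩, rfl⟩

lemma card_interedges_le_card_filter_adj {v : V} (h : ∀ b ∈ X, ∀ a ∈ Y, G.Adj b a → a = v) :
    #(G.interedges X Y) ≤ #{b ∈ X | G.Adj v b} := by
  refine card_le_card_of_injOn Prod.fst (fun ⟨b, a⟩ hba => ?_)
    fun ⟨b, a⟩ hba ⟨b', a'⟩ hba' hbb' => ?_
  · obtain ⟨hb, ha, hadj⟩ := G.mk_mem_interedges_iff.1 hba
    obtain rfl := h b hb a ha hadj
    exact mem_filter.2 ⟨hb, hadj.symm⟩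
  · obtain ⟨hb, ha, hadj⟩ := G.mk_mem_interedges_iff.1 hba
    obtain ⟨hb', ha', hadj'⟩ := G.mk_mem_interedges_iff.1 hba'
    rw [h b hb a ha hadj, h b' hb' a' ha' hadj']
    exact Prod.ext hbb' rfl

variable [DecidableEq V]

lemma card_interedges_union_left (h : Disjoint X Y) :
    #(G.interedges (X ∪ Y) Z) = #(G.interedges X Z) + #(G.interedges Y Z) := by
  rw [← card_union_of_disjoint (G.interedges_disjoint_left h Z)]
  congr 1
  ext ⟨a, b⟩
  simp only [mem_union, mk_mem_interedges_iff]
  tauto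

lemma card_interedges_union_self (h : Disjoint X Y) :
    #(G.interedges (X ∪ Y) (X ∪ Y)) =
      #(G.interedges X X) + #(G.interedges Y Y) + 2 * #(G.interedges X Y) := by
  rw [card_interedges_union_left h, card_interedges_comm X, card_interedges_comm Y,
    card_interedges_union_left h, card_interedges_union_left h, card_interedges_comm Y X]
  ring

end SimpleGraph

section Welfare

open SimpleGraph

variable {V : Type*} [DecidableEq V] {G : SimpleGraph V} [DecidableRel G.Adj] {X Y : Finset V}

lemma uw_eq_card_interedges_div (C : Finset V) : uw G C = #(G.interedges C C) / #C := rfl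

lemma uw_nonneg (C : Finset V) : 0 ≤ uw G C := by
  rw [uw_eq_card_interedges_div]
  positivity

lemma uw_mul_card (hX : X.Nonempty) : uw G X * #X = #(G.interedges X X) :=
  div_mul_cancel₀ _ (Nat.cast_ne_zero.2 hX.card_pos.ne')

lemma uw_union_le_add (h : Disjoint X Y) (hX : X.Nonempty) (hY : Y.Nonempty)
    (hcut : 2 * (#(G.interedges X Y) : ℚ) ≤ #Y * uw G X + #X * uw G Y) :
    uw G (X ∪ Y) ≤ uw G X + uw G Y := by
  have hXY : (0 : ℚ) < #X + #Y := by have := hX.card_pos; positivity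
  rw [uw_eq_card_interedges_div (X ∪ Y), card_union_of_disjoint h, card_interedges_union_self h]
  push_cast
  rw [div_le_iff₀ hXY]
  linarith [uw_mul_card (G := G) hX, uw_mul_card (G := G) hY]

lemma one_le_uw (hX : X.Nonempty) (h : ∀ x ∈ X, ∃ y ∈ X, G.Adj x y) : 1 ≤ uw G X := by
  rw [uw_eq_card_interedges_div, one_le_div (by exact_mod_cast hX.card_pos)]
  exact_mod_cast card_le_card_interedges_self h

lemma card_mul_card_sub_one_div_le_uw {N D : Finset V} (hND : N ⊆ D)
    (hN : G.IsClique (N : Set V)) : (#N : ℚ) * (#N - 1) / #D ≤ uw G D := by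
  have h₁ : (#(G.interedges N N) : ℚ) + #N = #N * #N := by
    exact_mod_cast card_interedges_self_of_isClique hN
  have h₂ : (#(G.interedges N N) : ℚ) ≤ #(G.interedges D D) := by
    exact_mod_cast card_le_card (G.interedges_mono hND hND)
  rw [uw_eq_card_interedges_div]
  gcongr
  linarith

lemma two_mul_le_add_div (d : ℕ) {y : ℚ} (hy : 2 ≤ y) :
    2 * (d : ℚ) ≤ y + 2 * (d * (d - 1)) / y := by
  have hy0 : 0 < y := by linarith
  rw [add_div' _ _ _ hy0.ne', le_div_iff₀ hy0]
  -- `y ^ 2 - 2 d y + 2 d (d - 1) = (y - d) ^ 2 + d (d - 2)`, and `d (d - 2) < 0` only for `d = 1`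
  rcases eq_or_ne d 1 with rfl | hd
  · push_cast
    nlinarith
  · have : 0 ≤ (d : ℚ) * (d - 2) := by
      rcases Nat.lt_or_ge d 2 with h | h
      · obtain rfl : d = 0 := by omega
        simp
      · have : (2 : ℚ) ≤ d := by exact_mod_cast h
        nlinarith
    nlinarith [sq_nonneg (y - d)]

end Welfare

section Split

open SimpleGraph

variable {V : Type*} [DecidableEq V] {G : SimpleGraph V} {C : Finset V} {u v : V}

lemma isStar_of_forall_not_adj (hconn : ∀ x ∈ C, ∀ y ∈ C, (G.restrict C).Reachable x y)
    (hv : v ∈ C) (h : ∀ a ∈ C.erase v, ∀ b ∈ C.erase v, ¬ G.Adj a b) : IsStar G C := by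
  refine ⟨v, hv, fun a ha hav => ?_, fun a ha b hb hav hbv =>
    h a (mem_erase.2 ⟨hav, ha⟩) b (mem_erase.2 ⟨hbv, hb⟩)⟩
  obtain ⟨w, hw, haw, -⟩ :=
    exists_adj_reachable_erase (mem_erase.2 ⟨hav.symm, hv⟩) (hconn v hv a ha)
  by_contra hva
  exact h a (mem_erase.2 ⟨hav, ha⟩) w
    (mem_erase.2 ⟨fun hwv => hva (hwv ▸ haw.symm), mem_of_mem_erase hw⟩) haw

lemma exists_adj_of_mem_sdiff_componentIn
    (hconn : ∀ x ∈ C, ∀ y ∈ C, (G.restrict C).Reachable x y) (hv : v ∈ C) {z : V}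
    (hz : z ∈ C.erase v) (hzD : z ∉ G.componentIn (C.erase v) u) :
    ∀ a ∈ C \ G.componentIn (C.erase v) u,
      ∃ b ∈ C \ G.componentIn (C.erase v) u, G.Adj a b := by
  intro a ha
  obtain ⟨haC, haD⟩ := mem_sdiff.1 ha
  rcases eq_or_ne a v with rfl | hav
  · obtain ⟨b, hb, hab, hzb⟩ := exists_adj_reachable_erase hz (hconn z (mem_of_mem_erase hz) a haC)
    refine ⟨b, mem_sdiff.2 ⟨mem_of_mem_erase hb, fun hbD => hzD ?_⟩, hab⟩
    exact mem_componentIn.2 ⟨hz, (mem_componentIn.1 hbD).2.trans hzb.symm⟩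
  · obtain ⟨b, hb, hab, -⟩ :=
      exists_adj_reachable_erase (mem_erase.2 ⟨hav.symm, hv⟩) (hconn v hv a haC)
    refine ⟨b, mem_sdiff.2 ⟨mem_of_mem_erase hb, fun hbD => haD ?_⟩, hab⟩
    exact mem_componentIn_of_adj hbD (mem_erase.2 ⟨hav, haC⟩) hab.symm

variable [DecidableRel G.Adj]

lemma uw_union_le_add_of_forall_not_adj {A B : Finset V} (h : Disjoint A B) (hA : A.Nonempty)
    (hB : B.Nonempty) (hAB : ∀ a ∈ A, ∀ b ∈ B, ¬ G.Adj a b) :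
    uw G (A ∪ B) ≤ uw G A + uw G B := by
  refine uw_union_le_add h hA hB ?_
  have : G.interedges A B = ∅ :=
    eq_empty_of_forall_notMem fun ⟨a, b⟩ hab =>
      have ⟨ha, hb, hadj⟩ := G.mk_mem_interedges_iff.1 hab
      hAB a ha b hb hadj
  rw [this, card_empty, Nat.cast_zero, mul_zero]
  have := uw_nonneg (G := G) A
  have := uw_nonneg (G := G) B
  positivity

lemma uw_le_add_uw_sdiff {D : Finset V} (hDC : D ⊆ C) (hv : v ∈ C \ D)
    (hcross : ∀ b ∈ D, ∀ a ∈ C \ D, G.Adj b a → a = v)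
    (hN : G.IsClique (({b ∈ D | G.Adj v b} : Finset V) : Set V)) (hD : 2 ≤ #D)
    (hX : ∀ x ∈ C \ D, ∃ y ∈ C \ D, G.Adj x y) :
    uw G C ≤ uw G D + uw G (C \ D) := by
  set X := C \ D
  set N := {b ∈ D | G.Adj v b}
  have hX2 : 2 ≤ #X := by
    obtain ⟨y, hy, hvy⟩ := hX v hv
    exact one_lt_card.2 ⟨v, hv, y, hy, hvy.ne⟩
  have hcut : 2 * (#(G.interedges D X) : ℚ) ≤ 2 * #N := by
    exact_mod_cast Nat.mul_le_mul_left 2 (card_interedges_le_card_filter_adj hcross)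
  have hDuw : (#N : ℚ) * (#N - 1) / #D ≤ uw G D :=
    card_mul_card_sub_one_div_le_uw (filter_subset _ D) hN
  have hXuw : 2 * uw G D ≤ #X * uw G D :=
    mul_le_mul_of_nonneg_right (by exact_mod_cast hX2) (uw_nonneg D)
  have hDX : (#D : ℚ) ≤ #D * uw G X :=
    le_mul_of_one_le_right (by positivity) (one_le_uw ⟨v, hv⟩ hX)
  have hd := two_mul_le_add_div #N (show (2 : ℚ) ≤ #D by exact_mod_cast hD)
  rw [mul_div_assoc] at hd
  calc uw G C = uw G (D ∪ X) := by rw [union_sdiff_of_subset hDC]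
    _ ≤ uw G D + uw G X :=
      uw_union_le_add disjoint_sdiff (card_pos.1 (by omega)) ⟨v, hv⟩ (by linarith)

end Split

namespace IsBlockGraph

open SimpleGraph

variable {V : Type*} [DecidableEq V] {G : SimpleGraph V} [DecidableRel G.Adj] {C : Finset V}

theorem exists_uw_le_add_of_reachable (hG : IsBlockGraph G)
    (hconn : ∀ x ∈ C, ∀ y ∈ C, (G.restrict C).Reachable x y) (hnc : ¬ G.IsClique (C : Set V))
    (hns : ¬ IsStar G C) : ∃ A, A.Nonempty ∧ A ⊂ C ∧ uw G C ≤ uw G A + uw G (C \ A) := by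
  obtain ⟨v, hv, x, hx, y, hy, hxy⟩ := hG.exists_cut_vertex hconn hnc
  obtain ⟨u, hu, w, hw, huw⟩ : ∃ u ∈ C.erase v, ∃ w ∈ C.erase v, G.Adj u w := by
    by_contra! h
    exact hns (isStar_of_forall_not_adj hconn hv h)
  set D := G.componentIn (C.erase v) u
  have hDC : D ⊆ C := componentIn_subset.trans (erase_subset v C)
  have hvD : v ∉ D := fun h => ne_of_mem_erase (componentIn_subset h) rfl
  obtain ⟨z, hz, hzD⟩ : ∃ z ∈ C.erase v, z ∉ D := by
    by_contra! h
    exact hxy ((mem_componentIn.1 (h x hx)).2.symm.trans (mem_componentIn.1 (h y hy)).2)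
  refine ⟨D, ⟨u, mem_componentIn_self hu⟩, (ssubset_iff_of_subset hDC).2 ⟨v, hv, hvD⟩,
    uw_le_add_uw_sdiff hDC (mem_sdiff.2 ⟨hv, hvD⟩) ?_ ?_ ?_
      (exists_adj_of_mem_sdiff_componentIn hconn hv hz hzD)⟩
  · intro b hb a ha hba
    by_contra hav
    exact (mem_sdiff.1 ha).2
      (mem_componentIn_of_adj hb (mem_erase.2 ⟨hav, (mem_sdiff.1 ha).1⟩) hba)
  · intro b₁ hb₁ b₂ hb₂ hne
    simp only [coe_filter, Set.mem_ofPred_eq] at hb₁ hb₂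
    exact hG.adj_of_reachable_restrict (s := C.erase v) (by simp) hb₁.2 hb₂.2 hne
      ((mem_componentIn.1 hb₁.1).2.symm.trans (mem_componentIn.1 hb₂.1).2)
  · exact one_lt_card.2 ⟨u, mem_componentIn_self hu, w,
      mem_componentIn_of_adj (mem_componentIn_self hu) hw huw, huw.ne⟩

theorem exists_uw_le_add (hG : IsBlockGraph G) (hnc : ¬ G.IsClique (C : Set V))
    (hns : ¬ IsStar G C) : ∃ A, A.Nonempty ∧ A ⊂ C ∧ uw G C ≤ uw G A + uw G (C \ A) := by
  by_cases hconn : ∀ x ∈ C, ∀ y ∈ C, (G.restrict C).Reachable x y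
  · exact hG.exists_uw_le_add_of_reachable hconn hnc hns
  push Not at hconn
  obtain ⟨p, hp, q, hq, hpq⟩ := hconn
  set A := G.componentIn C p
  have hqA : q ∉ A := fun h => hpq (mem_componentIn.1 h).2
  refine ⟨A, ⟨p, mem_componentIn_self hp⟩, (ssubset_iff_of_subset componentIn_subset).2
    ⟨q, hq, hqA⟩, ?_⟩
  calc uw G C = uw G (A ∪ (C \ A)) := by rw [union_sdiff_of_subset componentIn_subset]
    _ ≤ _ := uw_union_le_add_of_forall_not_adj disjoint_sdiff ⟨p, mem_componentIn_self hp⟩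
      ⟨q, mem_sdiff.2 ⟨hq, hqA⟩⟩ fun a ha b hb hab =>
        (mem_sdiff.1 hb).2 (mem_componentIn_of_adj ha (mem_sdiff.1 hb).1 hab)

theorem exists_finpartition_card_parts_eq_two (hG : IsBlockGraph G)
    (hnc : ¬ G.IsClique (C : Set V)) (hns : ¬ IsStar G C) :
    ∃ Q : Finpartition C, #Q.parts = 2 ∧ uw G C ≤ ∑ D ∈ Q.parts, uw G D := by
  obtain ⟨A, hA, hAC, hle⟩ := hG.exists_uw_le_add hnc hns
  have hB : (C \ A).Nonempty := sdiff_nonempty.2 hAC.not_subset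
  have hAB : A ≠ C \ A := fun h => by
    obtain ⟨a, ha⟩ := hA
    exact (mem_sdiff.1 (h ▸ ha)).2 ha
  refine ⟨(Finpartition.indiscrete hB.ne_empty).extend hA.ne_empty sdiff_disjoint
    (sdiff_union_of_subset hAC.subset), ?_, ?_⟩
  · simp [hAB]
  · simpa [sum_pair hAB] using hle

theorem exists_finpartition_sum_uw_le_card_parts_lt (hG : IsBlockGraph G) {s : Finset V}
    (P : Finpartition s) (hC : C ∈ P.parts) (hnc : ¬ G.IsClique (C : Set V))
    (hns : ¬ IsStar G C) :
    ∃ P' : Finpartition s,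
      ∑ D ∈ P.parts, uw G D ≤ ∑ D ∈ P'.parts, uw G D ∧ #P.parts < #P'.parts := by
  classical
  choose Q hQcard hQuw using fun (D : Finset V) (h : ¬ G.IsClique (D : Set V) ∧ ¬ IsStar G D) =>
    hG.exists_finpartition_card_parts_eq_two h.1 h.2
  let R : ∀ D ∈ P.parts, Finpartition D := fun D hD =>
    if h : ¬ G.IsClique (D : Set V) ∧ ¬ IsStar G D then Q D h
    else Finpartition.indiscrete (P.ne_bot hD)
  have hRuw : ∀ D (hD : D ∈ P.parts), uw G D ≤ ∑ E ∈ (R D hD).parts, uw G E := by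
    intro D hD
    by_cases h : ¬ G.IsClique (D : Set V) ∧ ¬ IsStar G D
    · simpa [R, h] using hQuw D h
    · simp [R, h]
  have hRcard : ∀ D (hD : D ∈ P.parts), 1 ≤ #(R D hD).parts := fun D hD =>
    card_pos.2 ((R D hD).parts_nonempty (P.ne_bot hD))
  have hRC : 1 < #(R C hC).parts := by simp [R, hnc, hns, hQcard]
  refine ⟨P.bind R, ?_, ?_⟩
  · rw [show (P.bind R).parts = (Finpartition.combine _ P.supIndep.attach).parts from rfl,
      Finpartition.sum_combine, ← sum_attach]
    exact sum_le_sum fun D _ => hRuw D D.2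
  · rw [Finpartition.card_bind, ← card_attach, card_eq_sum_ones]
    exact sum_lt_sum (fun D _ => hRcard D D.2) ⟨⟨C, hC⟩, mem_attach _ _, hRC⟩

end IsBlockGraph

/-- On a finite block graph there is a utilitarian-welfare-maximizing partition of the
vertex set all of whose parts induce cliques or stars. -/
theorem exists_max_utilitarian_partition_clique_or_star
    {V : Type*} [Fintype V] [DecidableEq V] (G : SimpleGraph V) [DecidableRel G.Adj]
    (hG : IsBlockGraph G) :
    ∃ P : Finpartition (Finset.univ : Finset V),
      (∀ Q : Finpartition (Finset.univ : Finset V),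
        ∑ C ∈ Q.parts, uw G C ≤ ∑ C ∈ P.parts, uw G C) ∧
      ∀ C ∈ P.parts, G.IsClique (C : Set V) ∨ IsStar G C := by
  let welfare (P : Finpartition (univ : Finset V)) : ℚ := ∑ C ∈ P.parts, uw G C
  obtain ⟨P₀, -, hP₀⟩ := exists_max_image univ welfare univ_nonempty
  obtain ⟨P, hP, hPmax⟩ := exists_max_image {P | welfare P₀ ≤ welfare P} (#·.parts) ⟨P₀, by simp⟩
  have hP : ∀ Q, welfare Q ≤ welfare P :=
    fun Q => (hP₀ Q (mem_univ Q)).trans (by simpa using hP)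
  refine ⟨P, hP, fun C hC => ?_⟩
  by_contra! hbad
  obtain ⟨P', hle, hlt⟩ :=
    hG.exists_finpartition_sum_uw_le_card_parts_lt P hC hbad.1 hbad.2
  exact (hPmax P' (by simpa using (hP P₀).trans hle)).not_gt hlt
end

section
/- Let G = (V,E) be a finite block graph and let C ⊆ V be a coalition such that the induced subgraph G[C] is connected and has diameter at least 3. Then there exists a partition 𝒬 of C into nonempty parts, each of which induces a connected subgraph of diameter at most 2, such that Σ_{D∈𝒬} uw(D) ≥ uw(C). -/
open Finset

/-!
Induction on `|C|`. If `G[C]` has diameter at least 3, fix `u` and a vertex `v` of `C` at maximal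
distance `D ≥ 3` from `u` inside `C`, and let `c` be the neighbour of `v` on a shortest `u`–`v`
path. In a block graph two neighbours of a vertex that are joined by a path avoiding it are
adjacent; hence `c` separates `v` from `u`. Every vertex cut off from `u` by `c` lies within
distance `D` of `u` through `c`, so it is adjacent to `c`: these vertices and `c` form a star `A`
of diameter at most 2, the rest `B` is connected, and the `A`–`B` edges join `c` to a clique of
`B`. Counting edges gives `uw(C) ≤ uw(A) + uw(B)`, and we recurse on `B`.
-/

lemma add_add_two_mul_div_add_le {K : Type*} [Field K] [LinearOrder K] [IsStrictOrderedRing K]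
    {e₁ e₂ n₁ n₂ k : K} (hn₁ : 2 ≤ n₁) (hk : 1 ≤ k) (hkn₂ : k + 1 ≤ n₂)
    (he₁ : 2 * n₁ - 2 ≤ e₁) (he₂ : k * k - k ≤ e₂) :
    (e₁ + e₂ + 2 * k) / (n₁ + n₂) ≤ e₁ / n₁ + e₂ / n₂ := by
  have hn₁0 : 0 < n₁ := by linarith
  have hn₂0 : 0 < n₂ := by linarith
  -- `n₂² - 2kn₂ + (k² - k)n₁ ≥ ((n₂ - k)² - 1) + (k - 1)²` as `n₁ ≥ 2`, and `n₂ - k ≥ 1`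
  have key : 2 * k * n₂ ≤ n₂ * n₂ + (k * k - k) * n₁ := by
    nlinarith [mul_nonneg (sub_nonneg.mpr hkn₂) (by linarith : (0 : K) ≤ n₂ - k + 1),
      mul_nonneg (by nlinarith : (0 : K) ≤ k * k - k) (sub_nonneg.mpr hn₁), sq_nonneg (k - 1)]
  rw [div_add_div _ _ hn₁0.ne' hn₂0.ne', div_le_div_iff₀ (by positivity) (by positivity)]
  have h₁ : n₁ * (n₂ * n₂) ≤ e₁ * (n₂ * n₂) :=
    mul_le_mul_of_nonneg_right (by linarith) (by positivity)
  have h₂ : (k * k - k) * (n₁ * n₁) ≤ e₂ * (n₁ * n₁) :=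
    mul_le_mul_of_nonneg_right he₂ (by positivity)
  nlinarith [mul_le_mul_of_nonneg_left key hn₁0.le]

namespace SimpleGraph

variable {V : Type*} {G : SimpleGraph V}

lemma connected_induce_of_forall_walk_from {s : Set V} {x : V} (hx : x ∈ s)
    (h : ∀ a ∈ s, ∃ w : G.Walk x a, ∀ z ∈ w.support, z ∈ s) : (G.induce s).Connected := by
  rw [connected_iff_exists_forall_reachable]
  refine ⟨⟨x, hx⟩, fun ⟨a, ha⟩ => ?_⟩
  obtain ⟨w, hw⟩ := h a ha
  exact ⟨w.induce s hw⟩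

lemma Connected.exists_walk_of_induce {s : Set V} (h : (G.induce s).Connected) {x y : V}
    (hx : x ∈ s) (hy : y ∈ s) : ∃ w : G.Walk x y, ∀ z ∈ w.support, z ∈ s := by
  obtain ⟨p⟩ := h.preconnected ⟨x, hx⟩ ⟨y, hy⟩
  refine ⟨p.map (Embedding.induce s).toHom, fun z hz => ?_⟩
  obtain ⟨z', -, rfl⟩ := List.mem_map.mp (Walk.support_map _ p ▸ hz)
  exact z'.2

lemma Walk.length_induce {s : Set V} {x y : V} (w : G.Walk x y)
    (hw : ∀ z ∈ w.support, z ∈ s) : (w.induce s hw).length = w.length := by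
  have := congrArg Walk.length (w.map_induce hw)
  rwa [Walk.length_map] at this

lemma diam_induce_le {s : Set V} {n : ℕ}
    (h : ∀ x ∈ s, ∀ y ∈ s, ∃ w : G.Walk x y, (∀ z ∈ w.support, z ∈ s) ∧ w.length ≤ n) :
    (G.induce s).diam ≤ n := by
  refine ENat.toNat_le_of_le_natCast (ediam_le_iff.mpr fun ⟨x, hx⟩ ⟨y, hy⟩ => ?_)
  obtain ⟨w, hw, hlen⟩ := h x hx y hy
  calc (G.induce s).edist ⟨x, hx⟩ ⟨y, hy⟩ ≤ (w.induce s hw).length := edist_le _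
    _ ≤ n := by rw [w.length_induce]; exact_mod_cast hlen

lemma connected_induce_and_diam_le_two_of_adj_center {A : Set V} {c : V} (hc : c ∈ A)
    (hA : ∀ a ∈ A, a ≠ c → G.Adj c a) :
    (G.induce A).Connected ∧ (G.induce A).diam ≤ 2 := by
  have spoke : ∀ a ∈ A, ∃ w : G.Walk c a, (∀ z ∈ w.support, z ∈ A) ∧ w.length ≤ 1 := by
    intro a ha
    by_cases hac : a = c
    · subst hac
      exact ⟨.nil, by simpa using ha, by simp⟩
    · exact ⟨(hA a ha hac).toWalk, by simp [hc, ha], by simp⟩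
  refine ⟨connected_induce_of_forall_walk_from hc fun a ha => ?_,
    diam_induce_le fun x hx y hy => ?_⟩
  · obtain ⟨w, hw, -⟩ := spoke a ha
    exact ⟨w, hw⟩
  · obtain ⟨wx, hwx, hx1⟩ := spoke x hx
    obtain ⟨wy, hwy, hy1⟩ := spoke y hy
    refine ⟨wx.reverse.append wy, fun z hz => ?_, by simp; omega⟩
    rw [Walk.mem_support_append_iff, Walk.support_reverse, List.mem_reverse] at hz
    exact hz.elim (hwx z) (hwy z)

lemma Walk.IsPath.notMem_support_takeUntil_or_dropUntil [DecidableEq V] {u v a b : V}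
    {p : G.Walk u v} (hp : p.IsPath) (hb : b ∈ p.support) (hab : a ≠ b) :
    a ∉ (p.takeUntil b hb).support ∨ a ∉ (p.dropUntil b hb).support := by
  by_contra! ⟨htake, hdrop⟩
  have hnodup := hp.support_nodup
  rw [← p.take_spec hb, Walk.support_append, List.nodup_append] at hnodup
  rw [← Walk.cons_tail_support, List.mem_cons] at hdrop
  exact hnodup.2.2 a htake a (hdrop.resolve_left hab) rfl

lemma Walk.IsPath.connected_induce_insert_sdiff [DecidableEq V] {x y z a : V} {p : G.Walk y z}
    (hp : p.IsPath) (hxy : G.Adj x y) (hxz : G.Adj x z) (hax : a ≠ x) :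
    (G.induce (insert x {v | v ∈ p.support} \ {a})).Connected := by
  refine connected_induce_of_forall_walk_from ⟨Set.mem_insert x _, Ne.symm hax⟩ fun b hb => ?_
  obtain ⟨rfl | hbp, hba⟩ := hb
  · exact ⟨.nil, by simpa using hba⟩
  rcases hp.notMem_support_takeUntil_or_dropUntil hbp (Ne.symm hba) with h | h
  · refine ⟨.cons hxy (p.takeUntil b hbp), fun v hv => ?_⟩
    rw [Walk.support_cons, List.mem_cons] at hv
    rcases hv with rfl | hv
    · exact ⟨Set.mem_insert v _, Ne.symm hax⟩
    · exact ⟨Or.inr (p.support_takeUntil_subset_support hbp hv), fun hva => h (hva ▸ hv)⟩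
  · refine ⟨.cons hxz (p.dropUntil b hbp).reverse, fun v hv => ?_⟩
    rw [Walk.support_cons, List.mem_cons, Walk.support_reverse, List.mem_reverse] at hv
    rcases hv with rfl | hv
    · exact ⟨Set.mem_insert v _, Ne.symm hax⟩
    · exact ⟨Or.inr (p.support_dropUntil_subset_support hbp hv), fun hva => h (hva ▸ hv)⟩

theorem _root_.IsBlockGraph.adj_of_walk_avoiding (hG : IsBlockGraph G) {x y z : V}
    (hxy : G.Adj x y) (hxz : G.Adj x z) (hyz : y ≠ z) (w : G.Walk y z) (hxw : x ∉ w.support) :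
    G.Adj y z := by
  classical
  set p := w.bypass
  have hp : p.IsPath := w.bypass_isPath
  have hxp : x ∉ p.support := fun h => hxw (w.support_bypass_subset_support h)
  -- `x` and the path `p` span a cycle, which no single vertex disconnects
  set S : Set V := insert x {v | v ∈ p.support} with hS
  have hcard : 3 ≤ S.ncard := by
    have hsub : ({x, y, z} : Set V) ⊆ S := by
      simp [hS, Set.insert_subset_iff, p.start_mem_support, p.end_mem_support]
    calc 3 = ({x, y, z} : Set V).ncard :=
          (Set.ncard_eq_three.mpr ⟨x, y, z, hxy.ne, hxz.ne, hyz, rfl⟩).symm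
      _ ≤ S.ncard := Set.ncard_le_ncard hsub ((List.finite_toSet _).insert x)
  have hconn : (G.induce S).Connected := by
    refine connected_induce_of_forall_walk_from (Set.mem_insert x _) fun b hb => ?_
    rcases hb with rfl | hb
    · exact ⟨.nil, by simp [hS]⟩
    · refine ⟨.cons hxy (p.takeUntil b hb), fun v hv => ?_⟩
      rw [Walk.support_cons, List.mem_cons] at hv
      exact hv.imp id fun hv => p.support_takeUntil_subset_support hb hv
  refine hG S hcard hconn (fun a _ => ?_) (by simp [hS]) (by simp [hS, p.end_mem_support]) hyz
  by_cases hax : a = x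
  · rw [hax, hS, Set.insert_sdiff_self_of_notMem (s := {v | v ∈ p.support}) hxp]
    exact p.connected_induce_support
  · exact hp.connected_induce_insert_sdiff hxy hxz hax

/-- The distance from `x` to `y` in `G[s]`, measured by walks of `G` inside `s`; it is `0` when
there is no such walk (`sInf ∅ = 0`). -/
noncomputable def distIn (G : SimpleGraph V) (s : Set V) (x y : V) : ℕ :=
  sInf {n | ∃ w : G.Walk x y, (∀ z ∈ w.support, z ∈ s) ∧ w.length = n}

section distIn

variable {s : Set V} {u x y : V}

lemma distIn_le (w : G.Walk x y) (hw : ∀ z ∈ w.support, z ∈ s) : G.distIn s x y ≤ w.length :=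
  Nat.sInf_le ⟨w, hw, rfl⟩

lemma exists_walk_length_eq_distIn (w : G.Walk x y) (hw : ∀ z ∈ w.support, z ∈ s) :
    ∃ w' : G.Walk x y, (∀ z ∈ w'.support, z ∈ s) ∧ w'.length = G.distIn s x y :=
  Nat.sInf_mem (s := {n | ∃ w : G.Walk x y, (∀ z ∈ w.support, z ∈ s) ∧ w.length = n})
    ⟨_, w, hw, rfl⟩

lemma distIn_le_distIn_add_one (w : G.Walk u x) (hw : ∀ z ∈ w.support, z ∈ s) (hxy : G.Adj x y)
    (hy : y ∈ s) : G.distIn s u y ≤ G.distIn s u x + 1 := by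
  obtain ⟨w', hw', hlen⟩ := exists_walk_length_eq_distIn w hw
  calc G.distIn s u y ≤ (w'.concat hxy).length := distIn_le _ fun z hz => by
        rw [Walk.support_concat, List.mem_append, List.mem_singleton] at hz
        exact hz.elim (hw' z) fun h => h ▸ hy
    _ = G.distIn s u x + 1 := by rw [Walk.length_concat, hlen]

lemma distIn_add_length_dropUntil_le [DecidableEq V] {c : V} (w : G.Walk u x)
    (hw : ∀ z ∈ w.support, z ∈ s) (hc : c ∈ w.support) :
    G.distIn s u c + (w.dropUntil c hc).length ≤ w.length := by
  have hsplit := congrArg Walk.length (w.take_spec hc)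
  rw [Walk.length_append] at hsplit
  have := distIn_le (w.takeUntil c hc) fun z hz => hw z (w.support_takeUntil_subset_support hc hz)
  omega

lemma notMem_support_of_length_lt_distIn {c : V} (w : G.Walk u x) (hw : ∀ z ∈ w.support, z ∈ s)
    (hlen : w.length < G.distIn s u c) : c ∉ w.support := fun hc => by
  classical
  have := distIn_add_length_dropUntil_le w hw hc
  omega

lemma exists_adj_distIn_add_one (w : G.Walk u x) (hw : ∀ z ∈ w.support, z ∈ s)
    (hx : 0 < G.distIn s u x) :
    ∃ y, G.Adj y x ∧ G.distIn s u y + 1 = G.distIn s u x ∧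
      ∃ w' : G.Walk u y, (∀ z ∈ w'.support, z ∈ s) ∧ w'.length = G.distIn s u y := by
  obtain ⟨w', hw', hlen⟩ := exists_walk_length_eq_distIn w hw
  have hnil : ¬ w'.Nil := by rw [← Walk.length_eq_zero_iff]; omega
  have hdrop : ∀ z ∈ w'.dropLast.support, z ∈ s := fun z hz => by
    rw [Walk.support_dropLast hnil] at hz
    exact hw' z (List.mem_of_mem_dropLast hz)
  have hle := distIn_le _ hdrop
  have hge := distIn_le_distIn_add_one _ hdrop (w'.adj_penultimate hnil) (hw' x w'.end_mem_support)
  have := w'.length_dropLast_add_one hnil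
  exact ⟨w'.penultimate, w'.adj_penultimate hnil, by omega, w'.dropLast, hdrop, by omega⟩

lemma adj_of_forall_walk_mem_support {c : V} (w : G.Walk u x) (hw : ∀ z ∈ w.support, z ∈ s)
    (hthrough : ∀ w : G.Walk u x, (∀ z ∈ w.support, z ∈ s) → c ∈ w.support)
    (hx : G.distIn s u x ≤ G.distIn s u c + 1) (hcx : c ≠ x) : G.Adj c x := by
  classical
  obtain ⟨w', hw', hlen⟩ := exists_walk_length_eq_distIn w hw
  have hc := hthrough w' hw'
  have := distIn_add_length_dropUntil_le w' hw' hc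
  have hpos : (w'.dropUntil c hc).length ≠ 0 := fun h => hcx (Walk.eq_of_length_eq_zero h)
  exact Walk.adj_of_length_eq_one (p := w'.dropUntil c hc) (by omega)

lemma _root_.IsBlockGraph.mem_support_of_length_lt_distIn (hG : IsBlockGraph G) {v c q : V}
    (hcv : G.Adj c v) (hcq : G.Adj c q) (wq : G.Walk u q) (hwq : ∀ z ∈ wq.support, z ∈ s)
    (hqc : wq.length < G.distIn s u c) (hqv : wq.length + 1 < G.distIn s u v) (hv : v ∈ s)
    (w : G.Walk u v) : c ∈ w.support := by
  by_contra hcw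
  have hdq := distIn_le wq hwq
  have hcwq := notMem_support_of_length_lt_distIn wq hwq hqc
  have hvq : G.Adj v q := hG.adj_of_walk_avoiding hcv hcq (by rintro rfl; omega)
    (w.reverse.append wq) (by simp [hcw, hcwq])
  have := distIn_le_distIn_add_one wq hwq hvq.symm hv
  omega

end distIn

section componentAvoiding

open Classical in
noncomputable def componentAvoiding (G : SimpleGraph V) (C : Finset V) (c u : V) : Finset V :=
  C.filter fun x => ∃ w : G.Walk u x, ∀ z ∈ w.support, z ∈ C ∧ z ≠ c

variable {C : Finset V} {c u x : V}

lemma mem_componentAvoiding :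
    x ∈ G.componentAvoiding C c u ↔ ∃ w : G.Walk u x, ∀ z ∈ w.support, z ∈ C ∧ z ≠ c := by
  classical
  rw [componentAvoiding, mem_filter, and_iff_right_iff_imp]
  exact fun ⟨w, hw⟩ => (hw x w.end_mem_support).1

lemma mem_componentAvoiding_of_walk (w : G.Walk u x) (hw : ∀ z ∈ w.support, z ∈ C)
    (hc : c ∉ w.support) : x ∈ G.componentAvoiding C c u :=
  mem_componentAvoiding.mpr ⟨w, fun z hz => ⟨hw z hz, fun hzc => hc (hzc ▸ hz)⟩⟩

lemma componentAvoiding_subset : G.componentAvoiding C c u ⊆ C := fun x hx => by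
  obtain ⟨w, hw⟩ := mem_componentAvoiding.mp hx
  exact (hw x w.end_mem_support).1

lemma center_notMem_componentAvoiding : c ∉ G.componentAvoiding C c u := fun h => by
  obtain ⟨w, hw⟩ := mem_componentAvoiding.mp h
  exact (hw c w.end_mem_support).2 rfl

lemma connected_induce_componentAvoiding (hu : u ∈ C) (huc : u ≠ c) :
    (G.induce (G.componentAvoiding C c u : Set V)).Connected := by
  classical
  refine connected_induce_of_forall_walk_from (x := u)
    (mem_componentAvoiding.mpr ⟨.nil, by simp [hu, huc]⟩) fun b hb => ?_
  obtain ⟨w, hw⟩ := mem_componentAvoiding.mp hb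
  exact ⟨w, fun z hz => mem_componentAvoiding.mpr
    ⟨w.takeUntil z hz, fun z' hz' => hw z' (w.support_takeUntil_subset_support hz hz')⟩⟩

lemma eq_of_adj_of_notMem_componentAvoiding {a b : V} (ha : a ∈ C)
    (haB : a ∉ G.componentAvoiding C c u) (hb : b ∈ G.componentAvoiding C c u)
    (hab : G.Adj a b) : a = c := by
  by_contra hac
  obtain ⟨w, hw⟩ := mem_componentAvoiding.mp hb
  refine haB (mem_componentAvoiding.mpr ⟨w.concat hab.symm, fun z hz => ?_⟩)
  rw [Walk.support_concat, List.mem_append, List.mem_singleton] at hz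
  exact hz.elim (hw z) fun h => h ▸ ⟨ha, hac⟩

lemma _root_.IsBlockGraph.isClique_componentAvoiding (hG : IsBlockGraph G) :
    G.IsClique {b | b ∈ G.componentAvoiding C c u ∧ G.Adj c b} := by
  rintro y ⟨hy, hcy⟩ z ⟨hz, hcz⟩ hyz
  obtain ⟨wy, hwy⟩ := mem_componentAvoiding.mp hy
  obtain ⟨wz, hwz⟩ := mem_componentAvoiding.mp hz
  refine hG.adj_of_walk_avoiding hcy hcz hyz (wy.reverse.append wz) fun hc => ?_
  rw [Walk.mem_support_append_iff, Walk.support_reverse, List.mem_reverse] at hc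
  exact hc.elim (fun h => (hwy c h).2 rfl) fun h => (hwz c h).2 rfl

end componentAvoiding

structure IsStarSplit [DecidableEq V] (G : SimpleGraph V) (C A B : Finset V) (c : V) : Prop where
  disjoint : Disjoint A B
  union_eq : A ∪ B = C
  center_mem : c ∈ A
  adj_center : ∀ a ∈ A, a ≠ c → G.Adj c a
  exists_ne_center : ∃ a ∈ A, a ≠ c
  eq_center_of_adj : ∀ a ∈ A, ∀ b ∈ B, G.Adj a b → a = c
  isClique : G.IsClique {b | b ∈ B ∧ G.Adj c b}
  exists_adj : ∃ b ∈ B, G.Adj c b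
  exists_not_adj : ∃ b ∈ B, ¬ G.Adj c b
  connected : (G.induce (B : Set V)).Connected

lemma Connected.exists_max_distIn_of_two_lt_diam {C : Finset V}
    (hC : (G.induce (C : Set V)).Connected) (hdiam : 2 < (G.induce (C : Set V)).diam) :
    ∃ u ∈ C, ∃ v ∈ C, 2 < G.distIn C u v ∧ ∀ x ∈ C, G.distIn C u x ≤ G.distIn C u v := by
  obtain ⟨u, hu, y, hy, hfar⟩ : ∃ u ∈ C, ∃ y ∈ C, 2 < G.distIn C u y := by
    by_contra! h
    refine hdiam.not_ge (diam_induce_le fun x hx y hy => ?_)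
    obtain ⟨w, hw⟩ := hC.exists_walk_of_induce hx hy
    obtain ⟨w', hw', hlen⟩ := exists_walk_length_eq_distIn w hw
    exact ⟨w', hw', hlen ▸ h x hx y hy⟩
  obtain ⟨v, hv, hmax⟩ := C.exists_max_image (G.distIn C u) ⟨y, hy⟩
  exact ⟨u, hu, v, hv, hfar.trans_le (hmax y hy), hmax⟩

theorem _root_.IsBlockGraph.exists_isStarSplit [DecidableEq V] (hG : IsBlockGraph G)
    {C : Finset V} (hC : (G.induce (C : Set V)).Connected)
    (hdiam : 2 < (G.induce (C : Set V)).diam) : ∃ A B c, IsStarSplit G C A B c := by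
  obtain ⟨u, hu, v, hv, hfar, hmax⟩ := hC.exists_max_distIn_of_two_lt_diam hdiam
  obtain ⟨wv, hwv⟩ := hC.exists_walk_of_induce hu hv
  obtain ⟨c, hcv, hdc, wc, hwc, -⟩ := exists_adj_distIn_add_one wv hwv (by omega)
  obtain ⟨q, hqc, hdq, wq, hwq, hwqlen⟩ := exists_adj_distIn_add_one wc hwc (by omega)
  have hcut := hG.mem_support_of_length_lt_distIn hcv hqc.symm wq hwq (by omega) (by omega) hv
  have hcC : c ∈ C := hwc c wc.end_mem_support
  have huc : u ≠ c := by
    rintro rfl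
    have := distIn_le (s := C) (Walk.nil : G.Walk u u) (by simpa using hu)
    simp only [Walk.length_nil] at this
    omega
  set B := G.componentAvoiding C c u
  refine ⟨C \ B, B, c,
    { disjoint := sdiff_disjoint
      union_eq := sdiff_union_of_subset componentAvoiding_subset
      center_mem := mem_sdiff.mpr ⟨hcC, center_notMem_componentAvoiding⟩
      adj_center := fun a ha hac => ?_
      exists_ne_center := ⟨v, mem_sdiff.mpr ⟨hv, fun hvB => ?_⟩, hcv.ne'⟩
      eq_center_of_adj := fun a ha b hb =>
        eq_of_adj_of_notMem_componentAvoiding (mem_sdiff.mp ha).1 (mem_sdiff.mp ha).2 hb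
      isClique := hG.isClique_componentAvoiding
      exists_adj := ⟨q, mem_componentAvoiding_of_walk wq hwq
        (notMem_support_of_length_lt_distIn wq hwq (by omega)), hqc.symm⟩
      exists_not_adj := ⟨u, mem_componentAvoiding_of_walk .nil (by simpa using hu)
        (by simpa using huc.symm), fun hcu => ?_⟩
      connected := connected_induce_componentAvoiding hu huc }⟩
  · obtain ⟨haC, haB⟩ := mem_sdiff.mp ha
    obtain ⟨wa, hwa⟩ := hC.exists_walk_of_induce hu haC
    have := hmax a haC
    refine adj_of_forall_walk_mem_support wa hwa (fun w hw => ?_) (by omega) (Ne.symm hac)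
    exact by_contra fun hcw => haB (mem_componentAvoiding_of_walk w hw hcw)
  · obtain ⟨w, hw⟩ := mem_componentAvoiding.mp hvB
    exact (hw c (hcut w)).2 rfl
  · have := distIn_le (s := C) hcu.symm.toWalk (by simp [hu, hcC])
    simp only [Walk.length_cons, Walk.length_nil] at this
    omega

lemma IsStarSplit.right_ssubset [DecidableEq V] {C A B : Finset V} {c : V}
    (h : IsStarSplit G C A B c) : B ⊂ C :=
  (ssubset_iff_of_subset (h.union_eq ▸ subset_union_right)).mpr
    ⟨c, h.union_eq ▸ mem_union_left B h.center_mem, Finset.disjoint_left.mp h.disjoint h.center_mem⟩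

section Welfare

variable [DecidableRel G.Adj]

def adjPairs (G : SimpleGraph V) [DecidableRel G.Adj] (X Y : Finset V) : Finset (V × V) :=
  (X ×ˢ Y).filter fun p => G.Adj p.1 p.2

lemma card_adjPairs_union [DecidableEq V] {A B : Finset V} (h : Disjoint A B) :
    #(G.adjPairs (A ∪ B) (A ∪ B)) = #(G.adjPairs A A) + #(G.adjPairs B A) +
      (#(G.adjPairs A B) + #(G.adjPairs B B)) := by
  have hdisj : ∀ {X Y X' Y' : Finset V}, Disjoint X X' ∨ Disjoint Y Y' →
      Disjoint (G.adjPairs X Y) (G.adjPairs X' Y') := fun h =>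
    disjoint_filter_filter (disjoint_product.mpr h)
  simp only [adjPairs, union_product, product_union, filter_union] at hdisj ⊢
  rw [card_union_of_disjoint (disjoint_union_left.mpr
      ⟨disjoint_union_right.mpr ⟨hdisj (Or.inr h), hdisj (Or.inr h)⟩,
        disjoint_union_right.mpr ⟨hdisj (Or.inr h), hdisj (Or.inr h)⟩⟩),
    card_union_of_disjoint (hdisj (Or.inl h)), card_union_of_disjoint (hdisj (Or.inl h))]

lemma two_mul_card_le_card_adjPairs_add_two [DecidableEq V] {A : Finset V} {c : V} (hc : c ∈ A)
    (hA : ∀ a ∈ A, a ≠ c → G.Adj c a) : 2 * #A ≤ #(G.adjPairs A A) + 2 := by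
  have hsub : {c} ×ˢ A.erase c ∪ A.erase c ×ˢ {c} ⊆ G.adjPairs A A := by
    intro ⟨a, b⟩ hab
    simp only [mem_union, mem_product, mem_singleton, mem_erase] at hab
    simp only [adjPairs, mem_filter, mem_product]
    rcases hab with ⟨rfl, hba, hb⟩ | ⟨⟨hac, ha⟩, rfl⟩
    · exact ⟨⟨hc, hb⟩, hA b hb hba⟩
    · exact ⟨⟨ha, hc⟩, (hA a ha hac).symm⟩
  have hcard := card_le_card hsub
  rw [card_union_of_disjoint (disjoint_product.mpr (Or.inl (by simp))), card_product,
    card_product, card_singleton, card_erase_of_mem hc] at hcard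
  have := card_pos.mpr ⟨c, hc⟩
  omega

lemma card_offDiag_le_card_adjPairs {K B : Finset V} (hKB : K ⊆ B)
    (hK : G.IsClique (K : Set V)) : #K.offDiag ≤ #(G.adjPairs B B) := by
  refine card_le_card fun ⟨a, b⟩ hab => ?_
  obtain ⟨ha, hb, hne⟩ := mem_offDiag.mp hab
  exact mem_filter.mpr ⟨mem_product.mpr ⟨hKB ha, hKB hb⟩, hK ha hb hne⟩

namespace IsStarSplit

variable [DecidableEq V] {C A B : Finset V} {c : V}

lemma adjPairs_left_right (h : IsStarSplit G C A B c) :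
    G.adjPairs A B = {c} ×ˢ B.filter (G.Adj c) := by
  ext ⟨a, b⟩
  simp only [adjPairs, mem_filter, mem_product, mem_singleton]
  constructor
  · rintro ⟨⟨ha, hb⟩, hab⟩
    obtain rfl := h.eq_center_of_adj a ha b hb hab
    exact ⟨rfl, hb, hab⟩
  · rintro ⟨rfl, hb, hab⟩
    exact ⟨⟨h.center_mem, hb⟩, hab⟩

lemma adjPairs_right_left (h : IsStarSplit G C A B c) :
    G.adjPairs B A = B.filter (G.Adj c) ×ˢ {c} := by
  ext ⟨b, a⟩
  simp only [adjPairs, mem_filter, mem_product, mem_singleton]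
  constructor
  · rintro ⟨⟨hb, ha⟩, hba⟩
    obtain rfl := h.eq_center_of_adj a ha b hb hba.symm
    exact ⟨⟨hb, hba.symm⟩, rfl⟩
  · rintro ⟨⟨hb, hab⟩, rfl⟩
    exact ⟨⟨hb, h.center_mem⟩, hab.symm⟩

lemma uw_le (h : IsStarSplit G C A B c) : uw G C ≤ uw G A + uw G B := by
  set K := B.filter (G.Adj c)
  have hpairs : #(G.adjPairs C C) = #(G.adjPairs A A) + #(G.adjPairs B B) + 2 * #K := by
    rw [← h.union_eq, card_adjPairs_union h.disjoint, h.adjPairs_left_right,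
      h.adjPairs_right_left, card_product, card_product, card_singleton]
    ring
  have hA := two_mul_card_le_card_adjPairs_add_two h.center_mem h.adj_center
  have hB : #K * #K ≤ #(G.adjPairs B B) + #K := by
    have hoff : #K.offDiag ≤ #(G.adjPairs B B) :=
      card_offDiag_le_card_adjPairs (filter_subset _ _) (by simpa [K] using h.isClique)
    rw [offDiag_card] at hoff
    have := Nat.le_mul_self #K
    omega
  have hA2 : 2 ≤ #A := by
    obtain ⟨a, ha, hac⟩ := h.exists_ne_center
    exact one_lt_card.mpr ⟨a, ha, c, h.center_mem, hac⟩
  have hK : 1 ≤ #K := by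
    obtain ⟨b, hb, hcb⟩ := h.exists_adj
    exact card_pos.mpr ⟨b, mem_filter.mpr ⟨hb, hcb⟩⟩
  have hKB : #K + 1 ≤ #B := by
    obtain ⟨b, hb, hcb⟩ := h.exists_not_adj
    exact card_lt_card ⟨filter_subset _ _, fun hsub => hcb (mem_filter.mp (hsub hb)).2⟩
  have hC : #C = #A + #B := by rw [← h.union_eq, card_union_of_disjoint h.disjoint]
  change (#(G.adjPairs C C) : ℚ) / #C ≤ #(G.adjPairs A A) / #A + #(G.adjPairs B B) / #B
  rw [hpairs, hC]
  push_cast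
  apply add_add_two_mul_div_add_le (k := (#K : ℚ))
  · exact_mod_cast hA2
  · exact_mod_cast hK
  · exact_mod_cast hKB
  · have : (2 * #A : ℚ) ≤ #(G.adjPairs A A) + 2 := by exact_mod_cast hA
    linarith
  · have : (#K * #K : ℚ) ≤ #(G.adjPairs B B) + #K := by exact_mod_cast hB
    linarith

end IsStarSplit

end Welfare

end SimpleGraph

theorem diam_ge_three_coalition_split_into_diam_le_two_general
    {V : Type*} [DecidableEq V] (G : SimpleGraph V) [DecidableRel G.Adj]
    (hG : IsBlockGraph G) (C : Finset V)
    (hconn : (G.induce (C : Set V)).Connected) :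
    ∃ Q : Finpartition C,
      (∀ D ∈ Q.parts, (G.induce (D : Set V)).Connected ∧ (G.induce (D : Set V)).diam ≤ 2) ∧
      uw G C ≤ ∑ D ∈ Q.parts, uw G D := by
  induction C using Finset.strongInduction with
  | H C ih =>
    by_cases hsmall : (G.induce (C : Set V)).diam ≤ 2
    · obtain ⟨⟨x, hx⟩⟩ := hconn.nonempty
      exact ⟨Finpartition.indiscrete (ne_empty_of_mem hx), by simp [hconn, hsmall], by simp⟩
    obtain ⟨A, B, c, h⟩ := hG.exists_isStarSplit hconn (by omega)
    have hA : A ≠ ∅ := ne_empty_of_mem h.center_mem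
    obtain ⟨Q, hQ, hQuw⟩ := ih B h.right_ssubset h.connected
    refine ⟨Q.extend hA h.disjoint.symm (by rw [sup_eq_union, union_comm, h.union_eq]), ?_, ?_⟩
    · simp only [Finpartition.extend_parts, mem_insert, forall_eq_or_imp]
      exact ⟨SimpleGraph.connected_induce_and_diam_le_two_of_adj_center h.center_mem
        h.adj_center, hQ⟩
    · have hAQ : A ∉ Q.parts := fun hAQ => hA (h.disjoint.eq_bot_of_le (Q.le hAQ))
      rw [Finpartition.extend_parts, sum_insert hAQ]
      linarith [h.uw_le]

/-- A coalition of a block graph inducing a connected subgraph of diameter at least 3 can be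
partitioned into coalitions inducing connected subgraphs of diameter at most 2 without
decreasing the utilitarian welfare. -/
theorem diam_ge_three_coalition_split_into_diam_le_two
    {V : Type*} [Fintype V] [DecidableEq V] (G : SimpleGraph V) [DecidableRel G.Adj]
    (hG : IsBlockGraph G) (C : Finset V)
    (hconn : (G.induce (C : Set V)).Connected)
    (hdiam : 3 ≤ (G.induce (C : Set V)).diam) :
    ∃ Q : Finpartition C,
      (∀ D ∈ Q.parts, (G.induce (D : Set V)).Connected ∧ (G.induce (D : Set V)).diam ≤ 2) ∧
      uw G C ≤ ∑ D ∈ Q.parts, uw G D :=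
  diam_ge_three_coalition_split_into_diam_le_two_general G hG C hconn
end

section
/- Let x, y, z be real numbers with x ≥ 2, y ≥ 2, and z ≥ y. Then (x − 2) + 2z/y − (x(x−1) + 2z)/(x + y − 1) = (y²(x−2) + 2(x−1)(z−y)) / (y(x + y − 1)) ≥ 0. -/
/-- The numerical inequality underlying the clique-splitting argument for coalitions in
fractional hedonic games. -/
theorem clique_split_inequality (x y z : ℝ)
    (hx : 2 ≤ x) (hy : 2 ≤ y) (hz : y ≤ z) :
    (x - 2) + 2 * z / y - (x * (x - 1) + 2 * z) / (x + y - 1)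
      = (y ^ 2 * (x - 2) + 2 * (x - 1) * (z - y)) / (y * (x + y - 1)) ∧
    0 ≤ (y ^ 2 * (x - 2) + 2 * (x - 1) * (z - y)) / (y * (x + y - 1)) := by
  have hy0 : (0:ℝ) < y := by linarith
  have hxy : (0:ℝ) < x + y - 1 := by linarith
  constructor
  · field_simp
    ring
  · apply div_nonneg
    · nlinarith
    · positivity
end

section
/- Let x and y be real numbers with x ≥ 3 and y ≥ 2. Then (x − 2) + 2(y−1)/y ≥ (x(x−1) + 2(y−1)) / (x + y − 1). -/
/-- The numerical inequality underlying the clique-splitting argument in the case where the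
remainder part is a star. -/
theorem clique_star_split_inequality (x y : ℝ) (hx : 3 ≤ x) (hy : 2 ≤ y) :
    (x * (x - 1) + 2 * (y - 1)) / (x + y - 1) ≤ (x - 2) + 2 * (y - 1) / y := by
  have hy0 : 0 < y := by linarith
  have hd : 0 < x + y - 1 := by linarith
  have key : (x - 2) + 2 * (y - 1) / y = ((x - 2) * y + 2 * (y - 1)) / y := by
    field_simp
  rw [key, div_le_div_iff₀ hd hy0]
  nlinarith [mul_nonneg (sub_nonneg.2 hx) (sub_nonneg.2 hy), sq_nonneg (y - 2), mul_nonneg (mul_nonneg (sub_nonneg.2 hx) (sub_nonneg.2 hy)) hy0.le]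
end

section
/- Let G = (V,E) be a finite simple graph with edge weights w : E → ℝ, and let S ⊆ V be a vertex cover of G of size τ. Then there exists a partition 𝒫 of V into nonempty parts with |𝒫| ≤ τ + 1 that maximizes the utilitarian welfare uw_w(𝒬) = Σ_{C∈𝒬} 2(Σ_{e∈E(G[C])} w(e))/|C| over all partitions 𝒬 of V into nonempty parts. -/
open Finset

/-- The utilitarian welfare `2(Σ_{e ∈ E(G[C])} w(e))/|C|` of a coalition `C` in a symmetric
weighted fractional hedonic game: for a symmetric weight function `w`, twice the total edge
weight inside `C` equals the sum of `w` over all ordered adjacent pairs inside `C`. -/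
noncomputable def uwW {V : Type*} [DecidableEq V] (G : SimpleGraph V) [DecidableRel G.Adj]
    (w : V → V → ℝ) (C : Finset V) : ℝ :=
  (∑ p ∈ (C ×ˢ C).filter fun p => G.Adj p.1 p.2, w p.1 p.2) / (C.card : ℝ)

/-!
A coalition avoiding a vertex cover induces no edge, so its welfare is zero. Hence, starting
from any welfare-maximizing partition, merging all parts that avoid the cover into a single part
changes no welfare, and leaves at most one part per cover vertex plus the merged one.
-/

namespace Finpartition

variable {α : Type*} [DecidableEq α] {s : Finset α} (P : Finpartition s) (S : Finset α)

lemma card_filter_not_disjoint_le : #(P.parts.filter (¬Disjoint · S)) ≤ #S := by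
  calc #(P.parts.filter (¬Disjoint · S)) ≤ #(S.image P.part) := by
        refine card_le_card fun t ht => ?_
        obtain ⟨ht, hmeet⟩ := mem_filter.1 ht
        obtain ⟨a, hat, haS⟩ := not_disjoint_iff.1 hmeet
        exact mem_image.2 ⟨a, haS, P.part_eq_of_mem ht hat⟩
    _ ≤ #S := card_image_le

/-- The finpartition of `s` obtained from `P` by merging all parts disjoint from `S`. -/
def mergeDisjointParts : Finpartition s :=
  (P.ofSubset (filter_subset (¬Disjoint · S) P.parts) rfl).extendOfLE
    (Finset.sup_le fun _ ht => P.le (mem_filter.1 ht).1)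

lemma filter_not_disjoint_subset_parts_mergeDisjointParts :
    P.parts.filter (¬Disjoint · S) ⊆ (P.mergeDisjointParts S).parts :=
  (P.ofSubset (filter_subset (¬Disjoint · S) P.parts) rfl).parts_subset_extendOfLE _

lemma mem_filter_not_disjoint_or_eq_of_mem_mergeDisjointParts {t : Finset α}
    (ht : t ∈ (P.mergeDisjointParts S).parts) :
    t ∈ P.parts.filter (¬Disjoint · S) ∨ t = s \ (P.parts.filter (¬Disjoint · S)).sup id :=
  mem_parts_or_eq_sdiff_of_mem_extendOfLE _ _ ht

lemma card_parts_mergeDisjointParts_le : #(P.mergeDisjointParts S).parts ≤ #S + 1 := by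
  have hsub : (P.mergeDisjointParts S).parts ⊆
      insert (s \ (P.parts.filter (¬Disjoint · S)).sup id) (P.parts.filter (¬Disjoint · S)) :=
    fun t ht => mem_insert.2 (P.mem_filter_not_disjoint_or_eq_of_mem_mergeDisjointParts S ht).symm
  calc #(P.mergeDisjointParts S).parts
      ≤ #(P.parts.filter (¬Disjoint · S)) + 1 := (card_le_card hsub).trans (card_insert_le _ _)
    _ ≤ #S + 1 := by grw [P.card_filter_not_disjoint_le S]

lemma disjoint_of_mem_mergeDisjointParts {t : Finset α} (ht : t ∈ (P.mergeDisjointParts S).parts)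
    (hnot : t ∉ P.parts) : Disjoint t S := by
  rcases P.mem_filter_not_disjoint_or_eq_of_mem_mergeDisjointParts S ht with ht | rfl
  · exact absurd (mem_filter.1 ht).1 hnot
  · refine disjoint_left.2 fun a ha haS => (mem_sdiff.1 ha).2 ?_
    -- the part of `P` containing `a ∈ S` meets `S`
    have has := (mem_sdiff.1 ha).1
    exact mem_sup.2 ⟨P.part a, mem_filter.2 ⟨P.part_mem.2 has,
      not_disjoint_iff.2 ⟨a, P.mem_part_self.2 has, haS⟩⟩, P.mem_part_self.2 has⟩

lemma sum_mergeDisjointParts {M : Type*} [AddCommMonoid M] {f : Finset α → M}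
    (hf : ∀ t, Disjoint t S → f t = 0) :
    ∑ t ∈ (P.mergeDisjointParts S).parts, f t = ∑ t ∈ P.parts, f t := by
  have hP : ∑ t ∈ P.parts, f t = ∑ t ∈ P.parts.filter (¬Disjoint · S), f t :=
    (sum_subset (filter_subset _ _) fun t ht hnot => hf t (by simpa [ht] using hnot)).symm
  rw [hP]
  refine (sum_subset (P.filter_not_disjoint_subset_parts_mergeDisjointParts S)
    fun t ht hnot => hf t ?_).symm
  by_cases htP : t ∈ P.parts
  · simpa [htP] using hnot
  · exact P.disjoint_of_mem_mergeDisjointParts S ht htP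

end Finpartition

lemma uwW_eq_zero_of_disjoint_vertexCover {V : Type*} [DecidableEq V] {G : SimpleGraph V}
    [DecidableRel G.Adj] (w : V → V → ℝ) {S C : Finset V}
    (hS : ∀ u v, G.Adj u v → u ∈ S ∨ v ∈ S) (hC : Disjoint C S) : uwW G w C = 0 := by
  have hnoEdge : (C ×ˢ C).filter (fun p => G.Adj p.1 p.2) = ∅ :=
    filter_eq_empty_iff.2 fun p hp hadj => by
      obtain ⟨hp₁, hp₂⟩ := mem_product.1 hp
      exact (hS _ _ hadj).elim (disjoint_left.1 hC hp₁) (disjoint_left.1 hC hp₂)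
  simp [uwW, hnoEdge]

theorem exists_max_utilitarian_partition_card_le_vertexCover_add_one_general
    {V : Type*} [Fintype V] [DecidableEq V] (G : SimpleGraph V) [DecidableRel G.Adj]
    (w : V → V → ℝ)
    (S : Finset V) (hS : ∀ u v, G.Adj u v → u ∈ S ∨ v ∈ S) :
    ∃ P : Finpartition (Finset.univ : Finset V),
      P.parts.card ≤ S.card + 1 ∧
      ∀ Q : Finpartition (Finset.univ : Finset V),
        ∑ C ∈ Q.parts, uwW G w C ≤ ∑ C ∈ P.parts, uwW G w C := by
  obtain ⟨P, hP⟩ := Finite.exists_max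
    fun Q : Finpartition (Finset.univ : Finset V) => ∑ C ∈ Q.parts, uwW G w C
  refine ⟨P.mergeDisjointParts S, P.card_parts_mergeDisjointParts_le S, fun Q => ?_⟩
  rw [P.sum_mergeDisjointParts S fun C hC => uwW_eq_zero_of_disjoint_vertexCover w hS hC]
  exact hP Q

/-- If `S` is a vertex cover of a finite edge-weighted graph `G` of size `τ`, then some
partition of the vertex set into at most `τ + 1` nonempty parts maximizes the utilitarian
welfare over all partitions. -/
theorem exists_max_utilitarian_partition_card_le_vertexCover_add_one
    {V : Type*} [Fintype V] [DecidableEq V] (G : SimpleGraph V) [DecidableRel G.Adj]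
    (w : V → V → ℝ) (hw : ∀ u v, w u v = w v u)
    (S : Finset V) (hS : ∀ u v, G.Adj u v → u ∈ S ∨ v ∈ S) :
    ∃ P : Finpartition (Finset.univ : Finset V),
      P.parts.card ≤ S.card + 1 ∧
      ∀ Q : Finpartition (Finset.univ : Finset V),
        ∑ C ∈ Q.parts, uwW G w C ≤ ∑ C ∈ P.parts, uwW G w C :=
  exists_max_utilitarian_partition_card_le_vertexCover_add_one_general G w S hS
end

section
/- Let n ≥ 2 be an even integer, let a_1, …, a_n be positive integers, and let W = Σ_{i=1}^{n} a_i. Construct the edge-weighted graph G on vertex set {v_1, v_2, w_1, w_2} ∪ {u_1, …, u_n} with edges and weights: {v_j, u_i} of weight (n/2+2)·a_i for j ∈ {1,2} and each i; {w_j, u_i} of weight (n/2+2)·((n+7/2)W − a_i) for j ∈ {1,2} and each i; {v_1, w_1} and {v_2, w_2} each of weight (n/2+2)·(n+3)W; and {v_1, v_2} of weight −(n/2+2)·(n+4)·W. Then every partition 𝒫 of the vertex set of G in which every vertex has utility at least (n + 7/2)·W consists of exactly two coalitions C_1 and C_2, where v_1, w_1 ∈ C_1, v_2, w_2 ∈ C_2,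 |C_1| = |C_2| = n/2 + 2, and the index set A_1 = {i : u_i ∈ C_1} satisfies Σ_{i∈A_1} a_i = W/2. -/
open Finset

/-- The vertex set of the hardness-reduction graph: `Sum.inl 0 = v₁`, `Sum.inl 1 = v₂`,
`Sum.inl 2 = w₁`, `Sum.inl 3 = w₂`, and `Sum.inr i = u_i` for `i = 1, …, n`. -/
abbrev HardVtx (n : ℕ) := Fin 4 ⊕ Fin n

/-- The symmetric edge-weight function of the hardness-reduction graph (with value `0` on
non-adjacent pairs), where `W = Σ_i a_i`:
* `{v_j, u_i}` has weight `(n/2+2)·a_i` for `j ∈ {1,2}`;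
* `{w_j, u_i}` has weight `(n/2+2)·((n+7/2)·W − a_i)` for `j ∈ {1,2}`;
* `{v₁, w₁}` and `{v₂, w₂}` have weight `(n/2+2)·(n+3)·W`;
* `{v₁, v₂}` has weight `−(n/2+2)·(n+4)·W`. -/
def hardWt (n : ℕ) (a : Fin n → ℕ) : HardVtx n → HardVtx n → ℚ := fun x y =>
  let W : ℚ := ∑ i, (a i : ℚ)
  match x, y with
  | Sum.inl j, Sum.inr i =>
      if j.val ≤ 1 then ((n : ℚ) / 2 + 2) * (a i : ℚ)
      else ((n : ℚ) / 2 + 2) * (((n : ℚ) + 7/2) * W - (a i : ℚ))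
  | Sum.inr i, Sum.inl j =>
      if j.val ≤ 1 then ((n : ℚ) / 2 + 2) * (a i : ℚ)
      else ((n : ℚ) / 2 + 2) * (((n : ℚ) + 7/2) * W - (a i : ℚ))
  | Sum.inl j, Sum.inl k =>
      if (j.val = 0 ∧ k.val = 2) ∨ (j.val = 2 ∧ k.val = 0) ∨
         (j.val = 1 ∧ k.val = 3) ∨ (j.val = 3 ∧ k.val = 1) then
        ((n : ℚ) / 2 + 2) * ((n : ℚ) + 3) * W
      else if (j.val = 0 ∧ k.val = 1) ∨ (j.val = 1 ∧ k.val = 0) then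
        -(((n : ℚ) / 2 + 2) * ((n : ℚ) + 4) * W)
      else 0
  | Sum.inr _, Sum.inr _ => 0

/-- The utility of a vertex `x` in a coalition `C`: the total weight of edges from `x` to
members of `C` (the weight function is `0` on non-edges and on the diagonal), divided by
`|C|`. -/
def hardUtility (n : ℕ) (a : Fin n → ℕ) (x : HardVtx n) (C : Finset (HardVtx n)) : ℚ :=
  (∑ y ∈ C, hardWt n a x y) / (C.card : ℚ)

namespace HardAux
variable {n : ℕ} (a : Fin n → ℕ)

lemma sum_decomp {M : Type*} [AddCommMonoid M] (C : Finset (HardVtx n)) (f : HardVtx n → M) :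
    ∑ y ∈ C, f y
      = (if Sum.inl 0 ∈ C then f (Sum.inl 0) else 0)
      + (if Sum.inl 1 ∈ C then f (Sum.inl 1) else 0)
      + (if Sum.inl 2 ∈ C then f (Sum.inl 2) else 0)
      + (if Sum.inl 3 ∈ C then f (Sum.inl 3) else 0)
      + ∑ i ∈ univ.filter (fun i => Sum.inr i ∈ C), f (Sum.inr i) := by
  have h1 : ∑ y ∈ C, f y = ∑ y : HardVtx n, if y ∈ C then f y else 0 := by
    rw [Finset.sum_ite_mem, Finset.univ_inter]
  rw [h1, Fintype.sum_sum_type, Fin.sum_univ_four, Finset.sum_filter]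

local notation "W" => ∑ i, ((a i : ℚ))
local notation "sq" => ((n : ℚ)/2 + 2)
local notation "Tq" => (((n:ℚ) + 7/2) * W)
local notation "F" C => Finset.univ.filter (fun i => (Sum.inr i : HardVtx n) ∈ C)
local notation "S" C => ∑ i ∈ Finset.univ.filter (fun i => (Sum.inr i : HardVtx n) ∈ C), ((a i : ℚ))

lemma fv0 : ((0:Fin 4):ℕ) = 0 := rfl
lemma fv1 : ((1:Fin 4):ℕ) = 1 := rfl
lemma fv2 : ((2:Fin 4):ℕ) = 2 := rfl
lemma fv3 : ((3:Fin 4):ℕ) = 3 := rfl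

lemma sum_v1 (C : Finset (HardVtx n)) : ∑ y ∈ C, hardWt n a (Sum.inl 0) y
    = (if Sum.inl 1 ∈ C then -(sq * ((n:ℚ)+4) * W) else 0)
    + (if Sum.inl 2 ∈ C then sq * ((n:ℚ)+3) * W else 0)
    + sq * (S C) := by
  rw [sum_decomp]
  simp [hardWt, fv0, fv1, fv2, fv3, ← Finset.mul_sum]

lemma sum_v2 (C : Finset (HardVtx n)) : ∑ y ∈ C, hardWt n a (Sum.inl 1) y
    = (if Sum.inl 0 ∈ C then -(sq * ((n:ℚ)+4) * W) else 0)
    + (if Sum.inl 3 ∈ C then sq * ((n:ℚ)+3) * W else 0)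
    + sq * (S C) := by
  rw [sum_decomp]
  simp [hardWt, fv0, fv1, fv2, fv3, ← Finset.mul_sum]

lemma sum_u (i : Fin n) (C : Finset (HardVtx n)) : ∑ y ∈ C, hardWt n a (Sum.inr i) y
    = (if Sum.inl 0 ∈ C then sq * (a i:ℚ) else 0)
    + (if Sum.inl 1 ∈ C then sq * (a i:ℚ) else 0)
    + (if Sum.inl 2 ∈ C then sq * (Tq - (a i:ℚ)) else 0)
    + (if Sum.inl 3 ∈ C then sq * (Tq - (a i:ℚ)) else 0) := by
  rw [sum_decomp]
  simp [hardWt, fv0, fv1, fv2, fv3]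

lemma card_decomp (C : Finset (HardVtx n)) :
    C.card = (if Sum.inl 0 ∈ C then 1 else 0) + (if Sum.inl 1 ∈ C then 1 else 0)
      + (if Sum.inl 2 ∈ C then 1 else 0) + (if Sum.inl 3 ∈ C then 1 else 0)
      + (F C).card := by
  rw [Finset.card_eq_sum_ones, sum_decomp, Finset.card_eq_sum_ones]

end HardAux

set_option maxHeartbeats 1000000 in
/-- Every partition of the hardness-reduction graph in which each vertex has utility at
least `(n + 7/2)·W` consists of exactly two coalitions `C₁ ∋ v₁, w₁` and `C₂ ∋ v₂, w₂`,
both of size `n/2 + 2`, and the items placed with `C₁` sum to `W/2`. -/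
theorem egalitarian_partition_structure
    (n : ℕ) (hn2 : 2 ≤ n) (hn : Even n) (a : Fin n → ℕ) (ha : ∀ i, 0 < a i)
    (P : Finpartition (Finset.univ : Finset (HardVtx n)))
    (hP : ∀ C ∈ P.parts, ∀ x ∈ C,
      ((n : ℚ) + 7/2) * (∑ i, (a i : ℚ)) ≤ hardUtility n a x C) :
    ∃ C₁ ∈ P.parts, ∃ C₂ ∈ P.parts,
      C₁ ≠ C₂ ∧ P.parts = {C₁, C₂} ∧
      (Sum.inl 0 : HardVtx n) ∈ C₁ ∧ (Sum.inl 2 : HardVtx n) ∈ C₁ ∧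
      (Sum.inl 1 : HardVtx n) ∈ C₂ ∧ (Sum.inl 3 : HardVtx n) ∈ C₂ ∧
      C₁.card = n / 2 + 2 ∧ C₂.card = n / 2 + 2 ∧
      (∑ i ∈ Finset.univ.filter (fun i => (Sum.inr i : HardVtx n) ∈ C₁), (a i : ℚ))
        = (∑ i, (a i : ℚ)) / 2 := by
  classical
  haveI : NeZero n := ⟨by omega⟩
  have hnQ : (2:ℚ) ≤ (n:ℚ) := by exact_mod_cast hn2
  have haQ : ∀ i, (0:ℚ) < (a i : ℚ) := fun i => by exact_mod_cast ha i
  have hW : 0 < ∑ i, (a i : ℚ) := Finset.sum_pos (fun i _ => haQ i) Finset.univ_nonempty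
  have hsq : (0:ℚ) < (n:ℚ)/2 + 2 := by linarith
  have hT : (0:ℚ) < ((n:ℚ) + 7/2) * ∑ i, (a i : ℚ) := by nlinarith
  have haW : ∀ i, (a i : ℚ) ≤ ∑ i, (a i : ℚ) := fun i =>
    Finset.single_le_sum (f := fun i => (a i : ℚ)) (fun j _ => (haQ j).le) (mem_univ i)
  have hSnn : ∀ C : Finset (HardVtx n),
      (0:ℚ) ≤ ∑ i ∈ Finset.univ.filter (fun i => (Sum.inr i : HardVtx n) ∈ C), (a i : ℚ) :=
    fun C => Finset.sum_nonneg (fun i _ => (haQ i).le)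
  have hSW : ∀ C : Finset (HardVtx n),
      (∑ i ∈ Finset.univ.filter (fun i => (Sum.inr i : HardVtx n) ∈ C), (a i : ℚ))
        ≤ ∑ i, (a i : ℚ) :=
    fun C => Finset.sum_le_sum_of_subset_of_nonneg (Finset.filter_subset _ _)
      (fun i _ _ => (haQ i).le)
  -- utility inequality in product form
  have key : ∀ C ∈ P.parts, ∀ x ∈ C,
      ((n : ℚ) + 7/2) * (∑ i, (a i : ℚ)) * (C.card : ℚ) ≤ ∑ y ∈ C, hardWt n a x y := by
    intro C hC x hx
    have h := hP C hC x hx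
    have hc : (0:ℚ) < (C.card : ℚ) := by
      exact_mod_cast Finset.card_pos.mpr ⟨x, hx⟩
    rw [hardUtility, le_div_iff₀ hc] at h
    exact h
  obtain ⟨C1, hC1, hv1⟩ := P.exists_mem (mem_univ (Sum.inl 0))
  obtain ⟨C2, hC2, hv2⟩ := P.exists_mem (mem_univ (Sum.inl 1))
  have hcard1 : (1:ℚ) ≤ (C1.card : ℚ) := by
    exact_mod_cast Finset.card_pos.mpr ⟨_, hv1⟩
  have hcard2 : (1:ℚ) ≤ (C2.card : ℚ) := by
    exact_mod_cast Finset.card_pos.mpr ⟨_, hv2⟩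
  -- w₁ ∈ C₁
  have hw1 : (Sum.inl 2 : HardVtx n) ∈ C1 := by
    by_contra hw
    have hk := key C1 hC1 _ hv1
    rw [HardAux.sum_v1, if_neg hw] at hk
    have hite : (if (Sum.inl 1 : HardVtx n) ∈ C1 then
        -(((n:ℚ)/2+2) * ((n:ℚ)+4) * ∑ i, (a i : ℚ)) else 0) ≤ 0 := by
      split_ifs with h
      · nlinarith
      · exact le_rfl
    have h1 : ((n:ℚ)/2+2) * (∑ i ∈ Finset.univ.filter
        (fun i => (Sum.inr i : HardVtx n) ∈ C1), (a i : ℚ)) ≤ ((n:ℚ)/2+2) * ∑ i, (a i : ℚ) :=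
      mul_le_mul_of_nonneg_left (hSW C1) hsq.le
    have h2 : ((n : ℚ) + 7/2) * (∑ i, (a i : ℚ)) * 1
        ≤ ((n : ℚ) + 7/2) * (∑ i, (a i : ℚ)) * (C1.card : ℚ) :=
      mul_le_mul_of_nonneg_left hcard1 hT.le
    nlinarith [hW, hnQ]
  -- v₂ ∉ C₁
  have hv2n1 : (Sum.inl 1 : HardVtx n) ∉ C1 := by
    intro hmem
    have hk := key C1 hC1 _ hv1
    rw [HardAux.sum_v1, if_pos hmem, if_pos hw1] at hk
    have h2 : ((n : ℚ) + 7/2) * (∑ i, (a i : ℚ)) * 1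
        ≤ ((n : ℚ) + 7/2) * (∑ i, (a i : ℚ)) * (C1.card : ℚ) :=
      mul_le_mul_of_nonneg_left hcard1 hT.le
    have h1 : ((n:ℚ)/2+2) * (∑ i ∈ Finset.univ.filter
        (fun i => (Sum.inr i : HardVtx n) ∈ C1), (a i : ℚ)) ≤ ((n:ℚ)/2+2) * ∑ i, (a i : ℚ) :=
      mul_le_mul_of_nonneg_left (hSW C1) hsq.le
    nlinarith [hW, hnQ]
  have hne : C1 ≠ C2 := fun h => hv2n1 (h ▸ hv2)
  have hdisj : Disjoint C1 C2 := P.disjoint hC1 hC2 hne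
  have hv1n2 : (Sum.inl 0 : HardVtx n) ∉ C2 := Finset.disjoint_left.mp hdisj hv1
  -- w₂ ∈ C₂
  have hw2 : (Sum.inl 3 : HardVtx n) ∈ C2 := by
    by_contra hw
    have hk := key C2 hC2 _ hv2
    rw [HardAux.sum_v2, if_neg hw, if_neg hv1n2] at hk
    have h2 : ((n : ℚ) + 7/2) * (∑ i, (a i : ℚ)) * 1
        ≤ ((n : ℚ) + 7/2) * (∑ i, (a i : ℚ)) * (C2.card : ℚ) :=
      mul_le_mul_of_nonneg_left hcard2 hT.le
    have h1 : ((n:ℚ)/2+2) * (∑ i ∈ Finset.univ.filter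
        (fun i => (Sum.inr i : HardVtx n) ∈ C2), (a i : ℚ)) ≤ ((n:ℚ)/2+2) * ∑ i, (a i : ℚ) :=
      mul_le_mul_of_nonneg_left (hSW C2) hsq.le
    nlinarith [hW, hnQ]
  have hw1n2 : (Sum.inl 2 : HardVtx n) ∉ C2 := Finset.disjoint_left.mp hdisj hw1
  have hw2n1 : (Sum.inl 3 : HardVtx n) ∉ C1 := Finset.disjoint_right.mp hdisj hw2
  -- each uᵢ is in C₁ or C₂
  have hcov : ∀ i : Fin n, (Sum.inr i : HardVtx n) ∈ C1 ∨ (Sum.inr i : HardVtx n) ∈ C2 := by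
    intro i
    obtain ⟨D, hD, hui⟩ := P.exists_mem (mem_univ (Sum.inr i))
    suffices h : (Sum.inl 2 : HardVtx n) ∈ D ∨ (Sum.inl 3 : HardVtx n) ∈ D by
      rcases h with h | h
      · left; rwa [P.eq_of_mem_parts hD hC1 h hw1] at hui
      · right; rwa [P.eq_of_mem_parts hD hC2 h hw2] at hui
    by_contra hcon
    push_neg at hcon
    have hk := key D hD _ hui
    rw [HardAux.sum_u, if_neg hcon.1, if_neg hcon.2] at hk
    have hcd : (1:ℚ) ≤ (D.card : ℚ) := by
      exact_mod_cast Finset.card_pos.mpr ⟨_, hui⟩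
    have h01 : (if (Sum.inl 0 : HardVtx n) ∈ D then ((n:ℚ)/2+2) * (a i : ℚ) else 0)
        + (if (Sum.inl 1 : HardVtx n) ∈ D then ((n:ℚ)/2+2) * (a i : ℚ) else 0)
        ≤ ((n:ℚ)/2+2) * (a i : ℚ) := by
      have hpos : (0:ℚ) ≤ ((n:ℚ)/2+2) * (a i : ℚ) := by positivity
      split_ifs with h0 h1
      · exfalso
        have hD1 : D = C1 := P.eq_of_mem_parts hD hC1 h0 hv1
        exact hv2n1 (hD1 ▸ h1)
      · linarith
      · linarith
      · linarith
    have h2 : ((n : ℚ) + 7/2) * (∑ i, (a i : ℚ)) * 1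
        ≤ ((n : ℚ) + 7/2) * (∑ i, (a i : ℚ)) * (D.card : ℚ) :=
      mul_le_mul_of_nonneg_left hcd hT.le
    have h3 : ((n:ℚ)/2+2) * (a i : ℚ) ≤ ((n:ℚ)/2+2) * ∑ i, (a i : ℚ) :=
      mul_le_mul_of_nonneg_left (haW i) hsq.le
    nlinarith [hW, hnQ]
  -- the partition has exactly the two parts
  have hparts : P.parts = {C1, C2} := by
    ext D
    simp only [Finset.mem_insert, Finset.mem_singleton]
    constructor
    · intro hD
      obtain ⟨x, hx⟩ := P.nonempty_of_mem_parts hD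
      have hx2 : x ∈ C1 ∨ x ∈ C2 := by
        rcases x with j | i
        · fin_cases j
          · exact Or.inl hv1
          · exact Or.inr hv2
          · exact Or.inl hw1
          · exact Or.inr hw2
        · exact hcov i
      rcases hx2 with h | h
      · exact Or.inl (P.eq_of_mem_parts hD hC1 hx h)
      · exact Or.inr (P.eq_of_mem_parts hD hC2 hx h)
    · rintro (rfl | rfl)
      · exact hC1
      · exact hC2
  -- index-set bookkeeping
  have hdisjF : Disjoint (Finset.univ.filter (fun i => (Sum.inr i : HardVtx n) ∈ C1))
      (Finset.univ.filter (fun i => (Sum.inr i : HardVtx n) ∈ C2)) := by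
    rw [Finset.disjoint_left]
    intro i h1 h2
    rw [Finset.mem_filter] at h1 h2
    exact (Finset.disjoint_left.mp hdisj h1.2) h2.2
  have hFun : (Finset.univ.filter (fun i => (Sum.inr i : HardVtx n) ∈ C1))
      ∪ (Finset.univ.filter (fun i => (Sum.inr i : HardVtx n) ∈ C2)) = Finset.univ := by
    ext i
    simp only [Finset.mem_union, Finset.mem_filter, Finset.mem_univ, true_and, iff_true]
    exact hcov i
  have hkk : (Finset.univ.filter (fun i => (Sum.inr i : HardVtx n) ∈ C1)).card
      + (Finset.univ.filter (fun i => (Sum.inr i : HardVtx n) ∈ C2)).card = n := by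
    rw [← Finset.card_union_of_disjoint hdisjF, hFun, Finset.card_univ, Fintype.card_fin]
  have hSS : (∑ i ∈ Finset.univ.filter (fun i => (Sum.inr i : HardVtx n) ∈ C1), (a i : ℚ))
      + (∑ i ∈ Finset.univ.filter (fun i => (Sum.inr i : HardVtx n) ∈ C2), (a i : ℚ))
      = ∑ i, (a i : ℚ) := by
    rw [← Finset.sum_union hdisjF, hFun]
  -- cardinalities of the parts
  have hcard1eq : C1.card = (Finset.univ.filter (fun i => (Sum.inr i : HardVtx n) ∈ C1)).card + 2 := by
    have h1 := HardAux.card_decomp (n := n) C1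
    rw [if_pos hv1, if_neg hv2n1, if_pos hw1, if_neg hw2n1] at h1
    omega
  have hcard2eq : C2.card = (Finset.univ.filter (fun i => (Sum.inr i : HardVtx n) ∈ C2)).card + 2 := by
    have h1 := HardAux.card_decomp (n := n) C2
    rw [if_neg hv1n2, if_pos hv2, if_neg hw1n2, if_pos hw2] at h1
    omega
  -- each side holds at most n/2 items
  have hhalf : ∀ (C : Finset (HardVtx n)), C ∈ P.parts →
      (Sum.inl 0 : HardVtx n) ∈ C → (Sum.inl 1 : HardVtx n) ∉ C →
      (Sum.inl 2 : HardVtx n) ∈ C → (Sum.inl 3 : HardVtx n) ∉ C →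
      C.card = (Finset.univ.filter (fun i => (Sum.inr i : HardVtx n) ∈ C)).card + 2 →
      ((Finset.univ.filter (fun i => (Sum.inr i : HardVtx n) ∈ C)).card : ℚ) ≤ (n:ℚ)/2 := by
    intro C hC h0 h1 h2 h3 hcc
    rcases (Finset.univ.filter (fun i => (Sum.inr i : HardVtx n) ∈ C)).eq_empty_or_nonempty with
      he | ⟨i, hi⟩
    · rw [he]
      simp only [Finset.card_empty, Nat.cast_zero]
      positivity
    · rw [Finset.mem_filter] at hi
      have hk := key C hC _ hi.2
      rw [HardAux.sum_u, if_pos h0, if_neg h1, if_pos h2, if_neg h3] at hk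
      have hccQ : (C.card : ℚ)
          = ((Finset.univ.filter (fun i => (Sum.inr i : HardVtx n) ∈ C)).card : ℚ) + 2 := by
        exact_mod_cast hcc
      rw [hccQ] at hk
      by_contra hcon
      push_neg at hcon
      nlinarith [hT]
  have hv2n2self : (Sum.inl 1 : HardVtx n) ∈ C2 := hv2
  have hk1 := hhalf C1 hC1 hv1 hv2n1 hw1 hw2n1 hcard1eq
  have hk2 : ((Finset.univ.filter (fun i => (Sum.inr i : HardVtx n) ∈ C2)).card : ℚ) ≤ (n:ℚ)/2 := by
    -- C2 contains v₂, w₂ but not v₁, w₁; reuse the uᵢ computation directly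
    rcases (Finset.univ.filter (fun i => (Sum.inr i : HardVtx n) ∈ C2)).eq_empty_or_nonempty with
      he | ⟨i, hi⟩
    · rw [he]
      simp only [Finset.card_empty, Nat.cast_zero]
      positivity
    · rw [Finset.mem_filter] at hi
      have hk := key C2 hC2 _ hi.2
      rw [HardAux.sum_u, if_neg hv1n2, if_pos hv2, if_neg hw1n2, if_pos hw2] at hk
      have hccQ : (C2.card : ℚ)
          = ((Finset.univ.filter (fun i => (Sum.inr i : HardVtx n) ∈ C2)).card : ℚ) + 2 := by
        exact_mod_cast hcard2eq
      rw [hccQ] at hk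
      by_contra hcon
      push_neg at hcon
      nlinarith [hT]
  have hkkQ : ((Finset.univ.filter (fun i => (Sum.inr i : HardVtx n) ∈ C1)).card : ℚ)
      + ((Finset.univ.filter (fun i => (Sum.inr i : HardVtx n) ∈ C2)).card : ℚ) = (n:ℚ) := by
    exact_mod_cast hkk
  have hk1eq : ((Finset.univ.filter (fun i => (Sum.inr i : HardVtx n) ∈ C1)).card : ℚ) = (n:ℚ)/2 := by
    linarith
  have hk2eq : ((Finset.univ.filter (fun i => (Sum.inr i : HardVtx n) ∈ C2)).card : ℚ) = (n:ℚ)/2 := by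
    linarith
  obtain ⟨m, hm⟩ := hn
  have hmQ : (n:ℚ) = (m:ℚ) + (m:ℚ) := by exact_mod_cast congrArg (Nat.cast : ℕ → ℚ) hm
  have hF1m : (Finset.univ.filter (fun i => (Sum.inr i : HardVtx n) ∈ C1)).card = m := by
    have : ((Finset.univ.filter (fun i => (Sum.inr i : HardVtx n) ∈ C1)).card : ℚ) = (m:ℚ) := by
      rw [hk1eq]; rw [hmQ]; ring
    exact_mod_cast this
  have hF2m : (Finset.univ.filter (fun i => (Sum.inr i : HardVtx n) ∈ C2)).card = m := by
    have : ((Finset.univ.filter (fun i => (Sum.inr i : HardVtx n) ∈ C2)).card : ℚ) = (m:ℚ) := by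
      rw [hk2eq]; rw [hmQ]; ring
    exact_mod_cast this
  -- S₁ ≥ W/2 and S₂ ≥ W/2
  have hC1cQ : (C1.card : ℚ) = (n:ℚ)/2 + 2 := by
    have : (C1.card : ℚ)
        = ((Finset.univ.filter (fun i => (Sum.inr i : HardVtx n) ∈ C1)).card : ℚ) + 2 := by
      exact_mod_cast hcard1eq
    rw [this, hk1eq]
  have hC2cQ : (C2.card : ℚ) = (n:ℚ)/2 + 2 := by
    have : (C2.card : ℚ)
        = ((Finset.univ.filter (fun i => (Sum.inr i : HardVtx n) ∈ C2)).card : ℚ) + 2 := by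
      exact_mod_cast hcard2eq
    rw [this, hk2eq]
  have hS1 : (∑ i, (a i : ℚ))/2
      ≤ ∑ i ∈ Finset.univ.filter (fun i => (Sum.inr i : HardVtx n) ∈ C1), (a i : ℚ) := by
    have hk := key C1 hC1 _ hv1
    rw [HardAux.sum_v1, if_neg hv2n1, if_pos hw1, hC1cQ] at hk
    by_contra hcon
    push_neg at hcon
    nlinarith [hsq]
  have hS2 : (∑ i, (a i : ℚ))/2
      ≤ ∑ i ∈ Finset.univ.filter (fun i => (Sum.inr i : HardVtx n) ∈ C2), (a i : ℚ) := by
    have hk := key C2 hC2 _ hv2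
    rw [HardAux.sum_v2, if_neg hv1n2, if_pos hw2, hC2cQ] at hk
    by_contra hcon
    push_neg at hcon
    nlinarith [hsq]
  refine ⟨C1, hC1, C2, hC2, hne, hparts, hv1, hw1, hv2, hw2, ?_, ?_, ?_⟩
  · rw [hcard1eq, hF1m]; omega
  · rw [hcard2eq, hF2m]; omega
  · linarith
end

section
/- Let G = (V,E) be a finite simple graph and let C ⊆ V be a coalition such that G[C] is a block graph of diameter exactly 2 whose largest maximal clique C_x has size x ≥ 3 and whose unique cut vertex is v ∈ C_x. Set C' = C_x ∖ {v} and C'' = C ∖ C'. Then uw(C') + uw(C'') ≥ uw(C). -/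
open Finset

lemma connected_of_hub {V : Type*} (G : SimpleGraph V) {S : Set V} {c : V} (hc : c ∈ S)
    (h : ∀ a ∈ S, a ≠ c → G.Adj a c) : (G.induce S).Connected := by
  rw [SimpleGraph.connected_iff]
  refine ⟨?_, ⟨⟨c, hc⟩⟩⟩
  have key : ∀ a : S, (G.induce S).Reachable a ⟨c, hc⟩ := by
    rintro ⟨a, ha⟩
    by_cases hac : a = c
    · subst hac; exact SimpleGraph.Reachable.refl _
    · exact SimpleGraph.Adj.reachable (by simpa using h a ha hac)
  exact fun a b => (key a).trans (key b).symm


lemma walk_cases {W : Type*} {H : SimpleGraph W} {a b : W} (p : H.Walk a b)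
    (hlen : p.length ≤ 2) :
    a = b ∨ H.Adj a b ∨ ∃ z, H.Adj a z ∧ H.Adj z b := by
  cases p with
  | nil => left; rfl
  | cons h q =>
    cases q with
    | nil => right; left; exact h
    | cons h' r =>
      cases r with
      | nil => right; right; exact ⟨_, h, h'⟩
      | cons h'' r' => simp [SimpleGraph.Walk.length_cons] at hlen


lemma final_arith (Y D E : ℚ) (hY : 2 ≤ Y) (hD : 1 ≤ D) (hE : 2 * D ≤ E) :
    (Y * Y + Y + E) / (Y + (D + 1)) ≤ (Y * Y - Y) / Y + E / (D + 1) := by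
  have hYpos : (0 : ℚ) < Y := by linarith
  have hDpos : (0 : ℚ) < D + 1 := by linarith
  rw [div_add_div _ _ (ne_of_gt hYpos) (ne_of_gt hDpos),
    div_le_div_iff₀ (by linarith) (by positivity)]
  nlinarith [mul_nonneg (mul_nonneg (sub_nonneg.mpr hE) (by linarith : (0:ℚ) ≤ Y))
      (by linarith : (0:ℚ) ≤ Y),
    mul_nonneg (by linarith : (0:ℚ) ≤ Y) (mul_nonneg
      (by linarith : (0:ℚ) ≤ Y - 2)
      (by nlinarith : (0:ℚ) ≤ D * D + 2 * D - 1)),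
    mul_nonneg (by linarith : (0:ℚ) ≤ Y) (mul_nonneg
      (by linarith : (0:ℚ) ≤ D - 1) (by linarith : (0:ℚ) ≤ D + 3))]



set_option maxHeartbeats 1000000

/-- If a coalition `C` induces a block graph of diameter exactly 2 whose largest maximal
clique `Cx` has size `x ≥ 3` and whose unique cut vertex is `v ∈ Cx`, then splitting `C`
into `C' = Cx \ {v}` and `C'' = C \ C'` does not decrease the utilitarian welfare. -/
theorem diam_two_largest_clique_split
    {V : Type*} [Fintype V] [DecidableEq V] (G : SimpleGraph V) [DecidableRel G.Adj]
    (C Cx : Finset V) (v : V) (x : ℕ)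
    -- `G[C]` is a block graph: every subset of `C` inducing a 2-connected subgraph is a clique
    (hblock : ∀ S : Set V, S ⊆ (C : Set V) → 3 ≤ S.ncard → (G.induce S).Connected →
      (∀ u ∈ S, (G.induce (S \ {u})).Connected) → G.IsClique S)
    (hconn : (G.induce (C : Set V)).Connected)
    (hdiam : (G.induce (C : Set V)).diam = 2)
    -- `Cx` is a maximal clique of `G[C]`
    (hCxC : Cx ⊆ C) (hCxclique : G.IsClique (Cx : Set V))
    (hCxmaximal : ∀ K : Finset V, Cx ⊆ K → K ⊆ C → G.IsClique (K : Set V) → K = Cx)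
    -- `Cx` is a largest maximal clique of `G[C]`, of size `x ≥ 3`
    (hlargest : ∀ K : Finset V, K ⊆ C → G.IsClique (K : Set V) →
      (∀ K' : Finset V, K ⊆ K' → K' ⊆ C → G.IsClique (K' : Set V) → K' = K) →
      K.card ≤ Cx.card)
    (hx : Cx.card = x) (hx3 : 3 ≤ x)
    -- `v` is the unique cut vertex of `G[C]`, and `v ∈ Cx`
    (hvCx : v ∈ Cx)
    (hcut : ¬ (G.induce ((C : Set V) \ {v})).Connected)
    (huniq : ∀ u ∈ C, ¬ (G.induce ((C : Set V) \ {u})).Connected → u = v) :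
    uw G C ≤ uw G (Cx \ {v}) + uw G (C \ (Cx \ {v})) := by
    classical
  have L1 : ∀ u ∈ C, u ≠ v → G.Adj u v := by
    intro u huC huv
    have huC' : u ∈ (C : Set V) \ {v} := ⟨huC, by simp [huv]⟩
    rw [SimpleGraph.connected_iff] at hcut
    have hnp : ¬ (G.induce ((C : Set V) \ {v})).Preconnected :=
      fun hp => hcut ⟨hp, ⟨⟨u, huC'⟩⟩⟩
    unfold SimpleGraph.Preconnected at hnp
    push_neg at hnp
    obtain ⟨a, b, hab⟩ := hnp
    have hex : ∃ b : ((C : Set V) \ {v} : Set V),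
        ¬ (G.induce ((C : Set V) \ {v})).Reachable ⟨u, huC'⟩ b := by
      by_cases h : (G.induce ((C : Set V) \ {v})).Reachable ⟨u, huC'⟩ a
      · exact ⟨b, fun hb => hab (h.symm.trans hb)⟩
      · exact ⟨a, h⟩
    obtain ⟨⟨b, hb⟩, hub⟩ := hex
    have hbC : b ∈ (C : Set V) := hb.1
    have hbv : b ≠ v := hb.2
    have hedt : (G.induce (C : Set V)).ediam ≠ ⊤ :=
      SimpleGraph.ediam_ne_top_of_diam_ne_zero (by rw [hdiam]; norm_num)
    have huCs : u ∈ (C : Set V) := huC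
    have hd : (G.induce (C : Set V)).dist ⟨u, huCs⟩ ⟨b, hbC⟩ ≤ 2 := by
      rw [← hdiam]; exact SimpleGraph.dist_le_diam hedt
    obtain ⟨p, hp⟩ :=
      (hconn.preconnected ⟨u, huCs⟩ ⟨b, hbC⟩).exists_walk_length_eq_dist
    have hlen : p.length ≤ 2 := by rw [hp]; exact hd
    have reach_adj : ∀ (a b : V) (ha : a ∈ (C : Set V) \ {v}) (hb : b ∈ (C : Set V) \ {v}),
        G.Adj a b → (G.induce ((C : Set V) \ {v})).Reachable ⟨a, ha⟩ ⟨b, hb⟩ :=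
      fun a b ha hb h => SimpleGraph.Adj.reachable (by simpa using h)
    rcases walk_cases p hlen with heq | hadj | ⟨z, hz1, hz2⟩
    · have hube : u = b := congrArg Subtype.val heq
      subst hube
      exact absurd (SimpleGraph.Reachable.refl _) hub
    · exact absurd (reach_adj u b huC' hb (by simpa using hadj)) hub
    · by_cases hzv : (z : V) = v
      · have : G.Adj u (z : V) := by simpa using hz1
        rwa [hzv] at this
      · have hz : (z : V) ∈ (C : Set V) \ {v} := ⟨z.2, hzv⟩
        exact absurd ((reach_adj u z huC' hz (by simpa using hz1)).trans
          (reach_adj z b hz hb (by simpa using hz2))) hub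
  have L3 : ∃ w ∈ C, w ∉ Cx := by
    have hne : Nonempty ↥(C : Set V) := hconn.nonempty
    obtain ⟨a, b, hab⟩ := SimpleGraph.exists_dist_eq_diam (G := G.induce (C : Set V))
    rw [hdiam] at hab
    have hnadj : ¬ (G.induce (C : Set V)).Adj a b := fun h => by
      have := (SimpleGraph.dist_eq_one_iff_adj (G := G.induce (C : Set V))).mpr h
      omega
    have hne' : a ≠ b := fun h => by
      rw [h, SimpleGraph.dist_self] at hab; omega
    by_contra hc
    push_neg at hc
    have haCx : (a : V) ∈ Cx := hc _ a.2
    have hbCx : (b : V) ∈ Cx := hc _ b.2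
    have : G.Adj a b := hCxclique haCx hbCx (fun h => hne' (Subtype.ext h))
    exact hnadj (by simpa using this)

  -- L2
  have L2 : ∀ u ∈ Cx, u ≠ v → ∀ w ∈ C, w ∉ Cx → ¬ G.Adj u w := by
    intro u huCx huv w hwC hwCx hadj
    have hwv : w ≠ v := fun h => hwCx (h ▸ hvCx)
    have hwvAdj : G.Adj w v := L1 w hwC hwv
    set K : Finset V := insert w Cx with hK
    have hKC : K ⊆ C := insert_subset hwC hCxC
    have hKS : (K : Set V) = insert w (Cx : Set V) := by simp [hK]
    -- adjacency to v for all of K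
    have hadjv : ∀ a ∈ (K : Set V), a ≠ v → G.Adj a v := by
      intro a ha hav
      rw [hKS] at ha
      rcases ha with rfl | ha
      · exact hwvAdj
      · exact hCxclique ha hvCx hav
    have hvK : v ∈ (K : Set V) := by rw [hKS]; exact Set.mem_insert_of_mem _ hvCx
    have hconnK : (G.induce (K : Set V)).Connected :=
      connected_of_hub G hvK hadjv
    have hdel : ∀ u' ∈ (K : Set V), (G.induce ((K : Set V) \ {u'})).Connected := by
      intro u' hu'
      by_cases hu'v : u' = v
      · rw [hu'v]
        have huK : u ∈ (K : Set V) \ {v} := ⟨by rw [hKS]; exact Set.mem_insert_of_mem _ huCx, huv⟩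
        refine connected_of_hub G huK ?_
        rintro a ⟨haK, hav⟩ hau
        rw [hKS] at haK
        rcases haK with rfl | haK
        · exact hadj.symm
        · exact hCxclique haK huCx hau
      · have hvK' : v ∈ (K : Set V) \ {u'} := ⟨hvK, by simp; exact fun h => hu'v h.symm⟩
        refine connected_of_hub G hvK' ?_
        rintro a ⟨haK, _⟩ hav
        exact hadjv a haK hav
    have hncard : 3 ≤ (K : Set V).ncard := by
      rw [Set.ncard_coe_finset, hK, card_insert_of_notMem hwCx, hx]
      omega
    have hclique : G.IsClique (K : Set V) :=
      hblock (K : Set V) (by exact_mod_cast hKC) hncard hconnK hdel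
    have := hCxmaximal K (subset_insert _ _) hKC hclique
    rw [← this] at hwCx
    exact hwCx (mem_insert_self _ _)
  simp only [uw]
  classical
  have hvC : v ∈ C := hCxC hvCx
  set C' : Finset V := Cx \ {v} with hC'def
  set C'' : Finset V := C \ C' with hC''def
  set P : V × V → Prop := fun p => G.Adj p.1 p.2 with hP
  -- basic subset facts
  have hC'Cx : C' ⊆ Cx := sdiff_subset
  have hC'C : C' ⊆ C := hC'Cx.trans hCxC
  have hunion : C' ∪ C'' = C := union_sdiff_of_subset hC'C
  have hdisj : Disjoint C' C'' := disjoint_sdiff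
  have hvC'' : v ∈ C'' := mem_sdiff.mpr ⟨hvC, fun h => (mem_sdiff.mp h).2 (mem_singleton_self v)⟩
  have hmemC' : ∀ a, a ∈ C' → a ∈ Cx ∧ a ≠ v := by
    intro a ha
    have := mem_sdiff.mp ha
    exact ⟨this.1, by simpa using this.2⟩
  -- cardinalities
  have hy : C'.card = x - 1 := by
    rw [hC'def, card_sdiff_of_subset (singleton_subset_iff.mpr hvCx), card_singleton, hx]
  set y : ℕ := C'.card with hydef
  have hy2 : 2 ≤ y := by omega
  have hn : C.card = y + C''.card := by
    rw [← hunion, card_union_of_disjoint hdisj]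
  -- D = C'' \ {v}
  set D : Finset V := C'' \ {v} with hDdef
  have hD : C''.card = D.card + 1 := by
    rw [hDdef, card_sdiff_of_subset (singleton_subset_iff.mpr hvC''), card_singleton]
    have : 1 ≤ C''.card := card_pos.mpr ⟨v, hvC''⟩
    omega
  set d : ℕ := D.card with hddef
  have hd1 : 1 ≤ d := by
    obtain ⟨w, hwC, hwCx⟩ := L3
    have hwv : w ≠ v := fun h => hwCx (h ▸ hvCx)
    have hwC'' : w ∈ C'' := mem_sdiff.mpr ⟨hwC, fun h => hwCx (hC'Cx h)⟩
    exact card_pos.mpr ⟨w, mem_sdiff.mpr ⟨hwC'', by simpa using hwv⟩⟩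
  -- cross edges
  have hcross1 : (C' ×ˢ C'').filter P = C' ×ˢ ({v} : Finset V) := by
    ext ⟨a, b⟩
    simp only [mem_filter, mem_product, mem_singleton, hP]
    constructor
    · rintro ⟨⟨ha, hb⟩, hadj⟩
      obtain ⟨haCx, hav⟩ := hmemC' a ha
      refine ⟨ha, ?_⟩
      by_contra hbv
      obtain ⟨hbC, hbC'⟩ := mem_sdiff.mp hb
      have hbCx : b ∉ Cx := fun h => hbC' (mem_sdiff.mpr ⟨h, by simpa using hbv⟩)
      exact L2 a haCx hav b hbC hbCx hadj
    · rintro ⟨ha, rfl⟩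
      obtain ⟨haCx, hav⟩ := hmemC' a ha
      exact ⟨⟨ha, hvC''⟩, hCxclique haCx hvCx hav⟩
  have hcross2 : (C'' ×ˢ C').filter P = ({v} : Finset V) ×ˢ C' := by
    ext ⟨a, b⟩
    simp only [mem_filter, mem_product, mem_singleton, hP]
    constructor
    · rintro ⟨⟨ha, hb⟩, hadj⟩
      obtain ⟨hbCx, hbv⟩ := hmemC' b hb
      refine ⟨?_, hb⟩
      by_contra hav
      obtain ⟨haC, haC'⟩ := mem_sdiff.mp ha
      have haCx : a ∉ Cx := fun h => haC' (mem_sdiff.mpr ⟨h, by simpa using hav⟩)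
      exact L2 b hbCx hbv a haC haCx hadj.symm
    · rintro ⟨rfl, hb⟩
      obtain ⟨hbCx, hbv⟩ := hmemC' b hb
      exact ⟨⟨hvC'', hb⟩, (hCxclique hbCx hvCx hbv).symm⟩
  -- edges within C'
  have he' : (C' ×ˢ C').filter P = C'.offDiag := by
    ext ⟨a, b⟩
    simp only [mem_filter, mem_product, mem_offDiag, hP]
    constructor
    · rintro ⟨⟨ha, hb⟩, hadj⟩
      exact ⟨ha, hb, hadj.ne⟩
    · rintro ⟨ha, hb, hne⟩
      exact ⟨⟨ha, hb⟩, hCxclique (hmemC' a ha).1 (hmemC' b hb).1 hne⟩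
  have he'card : ((C' ×ˢ C').filter P).card = y * y - y := by
    rw [he', offDiag_card]
  -- edges within C'' : at least 2d
  have he''lb : 2 * d ≤ ((C'' ×ˢ C'').filter P).card := by
    have hsub : (D ×ˢ ({v} : Finset V)) ∪ (({v} : Finset V) ×ˢ D) ⊆ (C'' ×ˢ C'').filter P := by
      rintro ⟨a, b⟩ hm
      simp only [mem_union, mem_product, mem_singleton] at hm
      rcases hm with ⟨haD, hbv⟩ | ⟨hav, hbD⟩
      · obtain ⟨haC'', hav⟩ := mem_sdiff.mp haD
        have hav' : a ≠ v := by simpa using hav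
        refine mem_filter.mpr ⟨mem_product.mpr ⟨haC'', hbv ▸ hvC''⟩, ?_⟩
        rw [hbv]
        exact L1 a (mem_sdiff.mp haC'').1 hav'
      · obtain ⟨hbC'', hbv⟩ := mem_sdiff.mp hbD
        have hbv' : b ≠ v := by simpa using hbv
        refine mem_filter.mpr ⟨mem_product.mpr ⟨hav ▸ hvC'', hbC''⟩, ?_⟩
        rw [hav]
        exact (L1 b (mem_sdiff.mp hbC'').1 hbv').symm
    have hdisj2 : Disjoint (D ×ˢ ({v} : Finset V)) (({v} : Finset V) ×ˢ D) := by
      rw [disjoint_left]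
      rintro ⟨a, b⟩ h1 h2
      simp only [mem_product, mem_singleton] at h1 h2
      have : v ∈ D := h2.1 ▸ h1.1
      exact (mem_sdiff.mp this).2 (mem_singleton_self v)
    calc 2 * d = (D ×ˢ ({v} : Finset V)).card + (({v} : Finset V) ×ˢ D).card := by
          simp [card_product]; ring
      _ = ((D ×ˢ ({v} : Finset V)) ∪ (({v} : Finset V) ×ˢ D)).card :=
          (card_union_of_disjoint hdisj2).symm
      _ ≤ _ := card_le_card hsub
  -- total decomposition
  have htot : ((C ×ˢ C).filter P).card
      = ((C' ×ˢ C').filter P).card + ((C'' ×ˢ C'').filter P).card + 2 * y := by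
    have hprod : C ×ˢ C = ((C' ×ˢ C') ∪ (C'' ×ˢ C'')) ∪ ((C' ×ˢ C'') ∪ (C'' ×ˢ C')) := by
      rw [← hunion]
      ext ⟨a, b⟩
      simp only [mem_product, mem_union]
      tauto
    have d1 : Disjoint ((C' ×ˢ C') ∪ (C'' ×ˢ C'')) ((C' ×ˢ C'') ∪ (C'' ×ˢ C')) := by
      rw [disjoint_left]
      rintro ⟨a, b⟩ h1 h2
      simp only [mem_union, mem_product] at h1 h2
      have := disjoint_left.mp hdisj
      tauto
    have d2 : Disjoint (C' ×ˢ C') (C'' ×ˢ C'') := by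
      rw [disjoint_left]
      rintro ⟨a, b⟩ h1 h2
      simp only [mem_product] at h1 h2
      exact disjoint_left.mp hdisj h1.1 h2.1
    have d3 : Disjoint (C' ×ˢ C'') (C'' ×ˢ C') := by
      rw [disjoint_left]
      rintro ⟨a, b⟩ h1 h2
      simp only [mem_product] at h1 h2
      exact disjoint_left.mp hdisj h1.1 h2.1
    rw [hprod, filter_union, card_union_of_disjoint (disjoint_filter_filter d1),
      filter_union, card_union_of_disjoint (disjoint_filter_filter d2),
      filter_union, card_union_of_disjoint (disjoint_filter_filter d3),
      hcross1, hcross2, card_product, card_product]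
    simp [← hydef]
    ring
  -- now pure arithmetic
  set e'' : ℕ := ((C'' ×ˢ C'').filter P).card with he''def
  rw [htot, he'card, hn, hD]
  have hyy : y ≤ y * y := Nat.le_mul_of_pos_left y (by omega)
  have hY : (2 : ℚ) ≤ (y : ℚ) := by exact_mod_cast hy2
  have hDq : (1 : ℚ) ≤ (d : ℚ) := by exact_mod_cast hd1
  have hEq : 2 * (d : ℚ) ≤ (e'' : ℚ) := by exact_mod_cast he''lb
  have hYpos : (0 : ℚ) < (y : ℚ) := by linarith
  have hDpos : (0 : ℚ) < (d : ℚ) + 1 := by linarith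
  have hcast1 : ((y * y - y + e'' + 2 * y : ℕ) : ℚ)
      = (y : ℚ) * (y : ℚ) + (y : ℚ) + (e'' : ℚ) := by
    push_cast [Nat.cast_sub hyy]; ring
  have hcast2 : ((y * y - y : ℕ) : ℚ) = (y : ℚ) * (y : ℚ) - (y : ℚ) := by
    push_cast [Nat.cast_sub hyy]; ring
  rw [hcast1, hcast2]
  push_cast
  exact final_arith _ _ _ hY hDq hEq
end
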